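/- arXiv:2007.08387 — 6 statements merged into one kernel-verified Lean document; each statement's English description precedes it below -/
import Mathlib

section
/- In every finite parity game, for every node v exactly one of the two players has a winning strategy from v (this player is the winner b(v) of the game started at v); moreover, the winning player has a memoryless winning strategy from v. -/
/-!
A (finite) parity game: a finite nonempty node set `V`, an edge relation
`E : V → V → Prop` in which every node has a successor, an owner function
`a : V → ℤ` with values in `{-1, +1}`, and a priority function `p : V → ℕ`.
-/

/-- `f : ℕ → V` is a play from `v`: it starts at `v` and follows edges. -/
def IsPlay {V : Type*} (E : V → V → Prop) (v : V) (f : ℕ → V) : Prop :=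
  f 0 = v ∧ ∀ t, E (f t) (f (t + 1))

/-- A strategy for player `i`: given the past history and the current node owned
by `i`, it prescribes a successor of the current node. -/
def IsStrategy {V : Type*} (E : V → V → Prop) (a : V → ℤ) (i : ℤ)
    (σ : List V → V → V) : Prop :=
  ∀ h w, a w = i → E w (σ h w)

/-- A play is consistent with the strategy `σ` of player `i` if every move out of
a node owned by `i` is the one prescribed by `σ` (applied to the strict past
history and the current node). -/
def ConsistentPlay {V : Type*} (a : V → ℤ) (i : ℤ) (σ : List V → V → V)
    (f : ℕ → V) : Prop :=
  ∀ t, a (f t) = i → f (t + 1) = σ (List.ofFn fun j : Fin t => f j) (f t)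

/-- The `limsup` as `t → ∞` of the priorities seen along a play. -/
noncomputable def playLimsup {V : Type*} (p : V → ℕ) (f : ℕ → V) : ℕ :=
  Filter.atTop.limsup fun t => p (f t)

/-- Player `+1` wins a play if the limsup of the priorities is odd;
player `-1` wins otherwise (i.e. if it is even). -/
def WinsPlay {V : Type*} (p : V → ℕ) (i : ℤ) (f : ℕ → V) : Prop :=
  if i = 1 then Odd (playLimsup p f) else Even (playLimsup p f)

/-- Player `i` has a winning strategy from `v`: some strategy of `i` wins every
play from `v` consistent with it. -/
def WinningFrom {V : Type*} (E : V → V → Prop) (a : V → ℤ) (p : V → ℕ)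
    (i : ℤ) (v : V) : Prop :=
  ∃ σ : List V → V → V, IsStrategy E a i σ ∧
    ∀ f : ℕ → V, IsPlay E v f → ConsistentPlay a i σ f → WinsPlay p i f

/-- Player `i` has a memoryless winning strategy from `v`: a function `σ : V → V`
choosing a successor at every node owned by `i`, winning every play from `v` in
which every move from a node owned by `i` follows `σ`. -/
def MemorylessWinningFrom {V : Type*} (E : V → V → Prop) (a : V → ℤ) (p : V → ℕ)
    (i : ℤ) (v : V) : Prop :=
  ∃ σ : V → V, (∀ w, a w = i → E w (σ w)) ∧
    ∀ f : ℕ → V, IsPlay E v f → (∀ t, a (f t) = i → f (t + 1) = σ (f t)) →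
      WinsPlay p i f

/-!
Zielonka's recursion on the size of the arena. Let `d` be the top priority and `i` the player
it favours. The complement of the `i`-attractor of the nodes of priority `d` is a trap for `i`;
solve it recursively. If the opponent wins nowhere there, `i` wins everywhere: a play either
enters the attractor infinitely often, and then sees `d` infinitely often, or it eventually
stays in the subgame. Otherwise the opponent's winning region in the subgame is a dominion of the
opponent in the whole arena, and so is its attractor; what is left is a trap for the opponent,
solved recursively. Both recursions produce memoryless strategies. Finally a winning strategy of
one player and any strategy of the other determine a common play, which only one of them wins.
-/

open Filter Set

section ParityGame

variable {V : Type*} {E : V → V → Prop} {a : V → ℤ} {p : V → ℕ}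

theorem eq_of_ne_neg {x i : ℤ} (hx : x = 1 ∨ x = -1) (hi : i = 1 ∨ i = -1) (h : x ≠ -i) :
    x = i := by
  omega

section Plays

variable {i : ℤ} {f : ℕ → V}

theorem winsPlay_comp_add_iff (k : ℕ) : WinsPlay p i (fun t => f (t + k)) ↔ WinsPlay p i f := by
  simp only [WinsPlay, playLimsup, limsup_nat_add (fun t => p (f t)) k]

theorem playLimsup_eq_of_frequently_eq {d : ℕ} (hle : ∀ t, p (f t) ≤ d)
    (hd : ∃ᶠ t in atTop, p (f t) = d) : playLimsup p f = d :=
  le_antisymm (limsup_le_of_le (by isBoundedDefault) (Eventually.of_forall hle))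
    (le_limsup_of_frequently_le (hd.mono fun _ h => h.ge) (isBoundedUnder_of ⟨d, hle⟩))

theorem winsPlay_of_frequently_eq {d : ℕ} (hle : ∀ t, p (f t) ≤ d)
    (hd : ∃ᶠ t in atTop, p (f t) = d) : WinsPlay p (if Odd d then 1 else -1) f := by
  unfold WinsPlay
  rw [playLimsup_eq_of_frequently_eq hle hd]
  by_cases h : Odd d <;> simp [h, ← Nat.not_odd_iff_even]

theorem WinsPlay.not_neg (hi : i = 1 ∨ i = -1) (h : WinsPlay p i f) : ¬ WinsPlay p (-i) f := by
  rcases hi with rfl | rfl <;> simp_all [WinsPlay]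

end Plays

section Positional

def IsSubarena (E : V → V → Prop) (S : Set V) : Prop :=
  ∀ v ∈ S, ∃ w ∈ S, E v w

def IsStrategyIn (E : V → V → Prop) (a : V → ℤ) (S : Set V) (i : ℤ) (σ : V → V) : Prop :=
  ∀ v ∈ S, a v = i → E v (σ v) ∧ σ v ∈ S

def WinsIn (E : V → V → Prop) (a : V → ℤ) (p : V → ℕ) (S : Set V) (i : ℤ) (σ : V → V)
    (v : V) : Prop :=
  ∀ f, IsPlay E v f → (∀ t, f t ∈ S) → (∀ t, a (f t) = i → f (t + 1) = σ (f t)) →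
    WinsPlay p i f

def IsOpponentTrap (E : V → V → Prop) (a : V → ℤ) (S T : Set V) (i : ℤ) : Prop :=
  ∀ u ∈ T, a u ≠ i → ∀ w ∈ S, E u w → w ∈ T

def winRegion (E : V → V → Prop) (a : V → ℤ) (p : V → ℕ) (S : Set V) (i : ℤ) (σ : V → V) :
    Set V :=
  {v ∈ S | WinsIn E a p S i σ v}

structure IsDominion (E : V → V → Prop) (a : V → ℤ) (p : V → ℕ) (S W : Set V) (i : ℤ)
    (σ : V → V) : Prop where
  subset : W ⊆ S
  isStrategyIn : IsStrategyIn E a W i σ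
  isOpponentTrap : IsOpponentTrap E a S W i
  winsIn : ∀ v ∈ W, WinsIn E a p W i σ v

def PositionallyDetermined (E : V → V → Prop) (a : V → ℤ) (p : V → ℕ) (S : Set V) (i : ℤ) :
    Prop :=
  ∃ σ τ : V → V, IsStrategyIn E a S i σ ∧ IsStrategyIn E a S (-i) τ ∧
    ∀ v ∈ S, WinsIn E a p S i σ v ∨ WinsIn E a p S (-i) τ v

variable {S T : Set V} {i : ℤ} {σ σ' : V → V} {v : V}

theorem IsSubarena.exists_isStrategyIn (hS : IsSubarena E S) (i : ℤ) :
    ∃ σ, IsStrategyIn E a S i σ := by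
  choose! σ hσ using hS
  exact ⟨σ, fun v hv _ => (hσ v hv).symm⟩

theorem IsStrategyIn.piecewise [DecidablePred (· ∈ T)] (hσ : IsStrategyIn E a T i σ)
    (hTS : T ⊆ S) (hσ' : IsStrategyIn E a S i σ') : IsStrategyIn E a S i (T.piecewise σ σ') := by
  intro v hv hav
  by_cases hvT : v ∈ T
  · rw [piecewise_eq_of_mem _ _ _ hvT]
    exact (hσ v hvT hav).imp_right (hTS ·)
  · rw [piecewise_eq_of_notMem _ _ _ hvT]
    exact hσ' v hv hav

theorem WinsIn.winsPlay_of_forall_ge {f : ℕ → V} {k : ℕ} (h : WinsIn E a p S i σ (f k))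
    (hE : ∀ t, E (f t) (f (t + 1))) (hS : ∀ t ≥ k, f t ∈ S)
    (hc : ∀ t ≥ k, a (f t) = i → f (t + 1) = σ (f t)) : WinsPlay p i f := by
  rw [← winsPlay_comp_add_iff k]
  refine h _ ⟨by simp, fun t => ?_⟩ (fun t => hS _ (by omega)) fun t ht => ?_
  · show E (f (t + k)) (f (t + 1 + k))
    rw [Nat.add_right_comm]
    exact hE _
  · show f (t + 1 + k) = σ (f (t + k))
    rw [Nat.add_right_comm]
    exact hc _ (by omega) ht

theorem WinsIn.step {u w : V} (h : WinsIn E a p S i σ u) (hu : u ∈ S) (huw : E u w)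
    (hc : a u = i → w = σ u) : WinsIn E a p S i σ w := by
  rintro g ⟨hg0, hgE⟩ hgS hgc
  let f : ℕ → V := fun
    | 0 => u
    | t + 1 => g t
  refine (winsPlay_comp_add_iff (f := f) 1).mpr (h f ⟨rfl, ?_⟩ (fun | 0 => hu | t + 1 => hgS t) ?_)
  · rintro (_ | t)
    exacts [show E u (g 0) from hg0 ▸ huw, hgE t]
  · rintro (_ | t) hat
    exacts [hg0.trans (hc hat), hgc t hat]

theorem WinsIn.of_isOpponentTrap (hT : IsOpponentTrap E a S T i) (hσ : IsStrategyIn E a T i σ)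
    (heq : EqOn σ' σ T) (hv : v ∈ T) (h : WinsIn E a p T i σ v) : WinsIn E a p S i σ' v := by
  intro f hf hfS hc
  have hfT : ∀ t, f t ∈ T := by
    intro t
    induction t with
    | zero => exact hf.1 ▸ hv
    | succ t ih =>
      by_cases hat : a (f t) = i
      · rw [hc t hat, heq ih]
        exact (hσ _ ih hat).2
      · exact hT _ ih hat _ (hfS _) (hf.2 t)
  exact h f hf hfT fun t hat => (hc t hat).trans (heq (hfT t))

theorem WinsIn.of_sdiff {A : Set V} (hA : ∀ u ∈ A, WinsIn E a p S i σ u) (heq : EqOn σ σ' (S \ A))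
    (h : WinsIn E a p (S \ A) i σ' v) : WinsIn E a p S i σ v := by
  intro f hf hfS hc
  by_cases hhit : ∃ k, f k ∈ A
  · obtain ⟨k, hk⟩ := hhit
    exact (hA _ hk).winsPlay_of_forall_ge hf.2 (fun t _ => hfS t) fun t _ => hc t
  · push Not at hhit
    have hfSA : ∀ t, f t ∈ S \ A := fun t => ⟨hfS t, hhit t⟩
    exact h f hf hfSA fun t hat => (hc t hat).trans (heq (hfSA t))

theorem isDominion_winRegion (hT : IsOpponentTrap E a S T i) (hTS : T ⊆ S)
    (hσ : IsStrategyIn E a T i σ) : IsDominion E a p S (winRegion E a p T i σ) i σ where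
  subset _ hv := hTS hv.1
  isStrategyIn v hv hav :=
    have hvσ := hσ v hv.1 hav
    ⟨hvσ.1, hvσ.2, hv.2.step hv.1 hvσ.1 fun _ => rfl⟩
  isOpponentTrap u hu hau w hw huw :=
    ⟨hT u hu.1 hau w hw huw, hu.2.step hu.1 huw fun h => absurd h hau⟩
  winsIn _ hv f hf hfW hc := hv.2 f hf (fun t => (hfW t).1) hc

theorem positionallyDetermined_empty : PositionallyDetermined E a p ∅ i :=
  ⟨id, id, fun _ h => h.elim, fun _ h => h.elim, fun _ h => h.elim⟩

theorem PositionallyDetermined.neg (h : PositionallyDetermined E a p S i) :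
    PositionallyDetermined E a p S (-i) := by
  obtain ⟨σ, τ, hσ, hτ, hwin⟩ := h
  refine ⟨τ, σ, hτ, by rwa [neg_neg], fun v hv => ?_⟩
  rw [neg_neg]
  exact (hwin v hv).symm

end Positional

section Attractor

/-- Stage `n` of the `i`-attractor of `N` in `S`: the nodes from which player `i` can force a
visit to `N` within `n` moves. -/
def attractorStage (E : V → V → Prop) (a : V → ℤ) (S N : Set V) (i : ℤ) : ℕ → Set V
  | 0 => S ∩ N
  | n + 1 => attractorStage E a S N i n ∪ {v ∈ S |
      (a v = i ∧ ∃ w ∈ attractorStage E a S N i n, E v w) ∨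
        (a v ≠ i ∧ ∀ w ∈ S, E v w → w ∈ attractorStage E a S N i n)}

def attractor (E : V → V → Prop) (a : V → ℤ) (S N : Set V) (i : ℤ) : Set V :=
  ⋃ n, attractorStage E a S N i n

def IsAttractorStrategy (E : V → V → Prop) (a : V → ℤ) (S N : Set V) (i : ℤ) (σ : V → V) :
    Prop :=
  ∀ n v, v ∈ attractorStage E a S N i (n + 1) → v ∉ N → a v = i →
    σ v ∈ attractorStage E a S N i n

variable {S N : Set V} {i : ℤ} {σ : V → V} {v : V}

theorem attractorStage_mono : Monotone (attractorStage E a S N i) :=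
  monotone_nat_of_le_succ fun _ => subset_union_left

theorem attractorStage_subset : ∀ n, attractorStage E a S N i n ⊆ S
  | 0 => inter_subset_left
  | n + 1 => union_subset (attractorStage_subset n) (sep_subset _ _)

theorem inter_subset_attractor : S ∩ N ⊆ attractor E a S N i :=
  subset_iUnion (attractorStage E a S N i) 0

theorem sdiff_attractor_ssubset (h : (S ∩ N).Nonempty) : S \ attractor E a S N i ⊂ S :=
  sdiff_ssubset_left_iff.mpr (h.mono fun _ hv => ⟨hv.1, inter_subset_attractor hv⟩)

theorem mem_attractor_of_edge {w : V} (hv : v ∈ S) (hav : a v = i) (hvw : E v w)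
    (hw : w ∈ attractor E a S N i) : v ∈ attractor E a S N i := by
  obtain ⟨n, hn⟩ := mem_iUnion.mp hw
  exact mem_iUnion.mpr ⟨n + 1, .inr ⟨hv, .inl ⟨hav, w, hn, hvw⟩⟩⟩

theorem exists_attractor_eq_attractorStage [Finite V] :
    ∃ n, attractor E a S N i = attractorStage E a S N i n := by
  obtain ⟨n, hn⟩ :=
    WellFoundedGT.monotone_chain_condition ⟨attractorStage E a S N i, attractorStage_mono⟩
  refine ⟨n, subset_antisymm (iUnion_subset fun m => ?_) (subset_iUnion _ n)⟩
  rcases le_total n m with h | h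
  exacts [(hn m h).ge, attractorStage_mono h]

theorem mem_attractor_of_forall_edge [Finite V] (hv : v ∈ S) (hav : a v ≠ i)
    (h : ∀ w ∈ S, E v w → w ∈ attractor E a S N i) : v ∈ attractor E a S N i := by
  obtain ⟨n, hn⟩ := exists_attractor_eq_attractorStage (E := E) (a := a) (S := S) (N := N) (i := i)
  exact mem_iUnion.mpr ⟨n + 1, .inr ⟨hv, .inr ⟨hav, fun w hw hvw => hn ▸ h w hw hvw⟩⟩⟩

theorem isOpponentTrap_sdiff_attractor (ha : ∀ v, a v = 1 ∨ a v = -1) (hi : i = 1 ∨ i = -1) :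
    IsOpponentTrap E a S (S \ attractor E a S N i) (-i) := fun _ hu hau _ hw huw =>
  ⟨hw, fun hwA => hu.2 (mem_attractor_of_edge hu.1 (eq_of_ne_neg (ha _) hi hau) huw hwA)⟩

theorem IsSubarena.sdiff_attractor [Finite V] (hS : IsSubarena E S) :
    IsSubarena E (S \ attractor E a S N i) := by
  intro v hv
  by_cases hav : a v = i
  · obtain ⟨w, hw, hvw⟩ := hS v hv.1
    exact ⟨w, ⟨hw, fun hwA => hv.2 (mem_attractor_of_edge hv.1 hav hvw hwA)⟩, hvw⟩
  · by_contra! h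
    exact hv.2 (mem_attractor_of_forall_edge hv.1 hav fun w hw hvw =>
      by_contra fun hwA => h w ⟨hw, hwA⟩ hvw)

/-- The successor is taken from the first stage containing `v`, so it serves every `m`. -/
theorem exists_edge_mem_attractorStage {n : ℕ} (hv : v ∈ attractorStage E a S N i (n + 1))
    (hvN : v ∉ N) (hav : a v = i) :
    ∃ w, E v w ∧ ∀ m, v ∈ attractorStage E a S N i (m + 1) → w ∈ attractorStage E a S N i m := by
  classical
  have hex : ∃ k, v ∈ attractorStage E a S N i k := ⟨n + 1, hv⟩
  obtain ⟨k, hk⟩ : ∃ k, Nat.find hex = k + 1 :=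
    Nat.exists_eq_succ_of_ne_zero fun h0 => hvN (h0 ▸ Nat.find_spec hex).2
  have hvk := Nat.find_spec hex
  rw [hk] at hvk
  rcases hvk with hvk | ⟨-, ⟨-, w, hw, hvw⟩ | ⟨hav', -⟩⟩
  · exact absurd hvk (Nat.find_min hex (by omega))
  · refine ⟨w, hvw, fun m hm => attractorStage_mono ?_ hw⟩
    have := Nat.find_min' hex hm
    omega
  · exact absurd hav hav'

theorem IsSubarena.exists_isAttractorStrategy (hS : IsSubarena E S) (N : Set V) (i : ℤ) :
    ∃ σ, IsStrategyIn E a S i σ ∧ IsAttractorStrategy E a S N i σ := by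
  obtain ⟨σ₀, hσ₀⟩ := hS.exists_isStrategyIn (a := a) i
  have hmove : ∀ v, ∃ w, (v ∈ S → a v = i → E v w ∧ w ∈ S) ∧
      ∀ n, v ∈ attractorStage E a S N i (n + 1) → v ∉ N → a v = i →
        w ∈ attractorStage E a S N i n := by
    intro v
    by_cases h : ∃ n, v ∈ attractorStage E a S N i (n + 1) ∧ v ∉ N ∧ a v = i
    · obtain ⟨n, hv, hvN, hav⟩ := h
      obtain ⟨w, hvw, hw⟩ := exists_edge_mem_attractorStage hv hvN hav
      exact ⟨w, fun _ _ => ⟨hvw, attractorStage_subset n (hw n hv)⟩, fun m hm _ _ => hw m hm⟩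
    · push Not at h
      exact ⟨σ₀ v, hσ₀ v, fun n hn hvN hav => absurd hav (h n hn hvN)⟩
  choose σ hσ using hmove
  exact ⟨σ, fun v hv hav => (hσ v).1 hv hav, fun n v => (hσ v).2 n⟩

theorem IsAttractorStrategy.exists_ge_mem (hσ : IsAttractorStrategy E a S N i σ) {f : ℕ → V}
    (hfE : ∀ t, E (f t) (f (t + 1))) (hfS : ∀ t, f t ∈ S)
    (hc : ∀ t, f t ∈ attractor E a S N i → f t ∉ N → a (f t) = i → f (t + 1) = σ (f t))
    {k : ℕ} (hk : f k ∈ attractor E a S N i) : ∃ t ≥ k, f t ∈ N := by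
  obtain ⟨n, hn⟩ := mem_iUnion.mp hk
  induction n generalizing k with
  | zero => exact ⟨k, le_rfl, hn.2⟩
  | succ n ih =>
    rcases hn with hn | hnew
    · exact ih hk hn
    by_cases hkN : f k ∈ N
    · exact ⟨k, le_rfl, hkN⟩
    have hnext : f (k + 1) ∈ attractorStage E a S N i n := by
      rcases hnew.2 with ⟨hak, -⟩ | ⟨-, hall⟩
      · exact hc k hk hkN hak ▸ hσ n _ (.inr hnew) hkN hak
      · exact hall _ (hfS _) (hfE k)
    obtain ⟨t, hkt, ht⟩ := ih (mem_iUnion.mpr ⟨n, hnext⟩) hnext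
    exact ⟨t, by omega, ht⟩

end Attractor

section Zielonka

variable {S : Set V} {i : ℤ}

theorem IsAttractorStrategy.winsIn {W : Set V} {σ σA : V → V} {v : V}
    (hσA : IsAttractorStrategy E a S W i σA) (heq : EqOn σ σA (attractor E a S W i \ W))
    (hW : ∀ w ∈ W, WinsIn E a p S i σ w) (hv : v ∈ attractor E a S W i) :
    WinsIn E a p S i σ v := by
  intro f hf hfS hc
  obtain ⟨k, -, hk⟩ := hσA.exists_ge_mem hf.2 hfS
    (fun t htA htW hat => (hc t hat).trans (heq ⟨htA, htW⟩)) (hf.1 ▸ hv)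
  exact (hW _ hk).winsPlay_of_forall_ge hf.2 (fun t _ => hfS t) fun t _ => hc t

theorem IsSubarena.exists_winsIn_of_attractor (hS : IsSubarena E S) {N : Set V} {σ' : V → V}
    (hN : ∀ f : ℕ → V, (∀ t, f t ∈ S) → (∃ᶠ t in atTop, f t ∈ N) → WinsPlay p i f)
    (hσ' : IsStrategyIn E a (S \ attractor E a S N i) i σ')
    (hwin : ∀ v ∈ S \ attractor E a S N i, WinsIn E a p (S \ attractor E a S N i) i σ' v) :
    ∃ σ, IsStrategyIn E a S i σ ∧ ∀ v ∈ S, WinsIn E a p S i σ v := by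
  classical
  set A := attractor E a S N i
  obtain ⟨σA, hσAS, hσA⟩ := hS.exists_isAttractorStrategy (a := a) N i
  refine ⟨(S \ A).piecewise σ' σA, hσ'.piecewise sdiff_subset hσAS, fun v _ f hf hfS hc => ?_⟩
  by_cases hfreq : ∃ᶠ t in atTop, f t ∈ A
  · refine hN f hfS (frequently_atTop.mpr fun k => ?_)
    obtain ⟨t, hkt, ht⟩ := frequently_atTop.mp hfreq k
    obtain ⟨s, hts, hs⟩ := hσA.exists_ge_mem hf.2 hfS (fun t htA _ hat =>
      (hc t hat).trans (piecewise_eq_of_notMem _ _ _ fun h => h.2 htA)) ht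
    exact ⟨s, hkt.trans hts, hs⟩
  · obtain ⟨k, hk⟩ := eventually_atTop.mp (not_frequently.mp hfreq)
    have hfSA : ∀ t ≥ k, f t ∈ S \ A := fun t ht => ⟨hfS t, hk t ht⟩
    exact (hwin (f k) (hfSA k le_rfl)).winsPlay_of_forall_ge hf.2 hfSA fun t ht hat =>
      (hc t hat).trans (piecewise_eq_of_mem _ _ _ (hfSA t ht))

theorem IsSubarena.positionallyDetermined_of_isDominion (ha : ∀ v, a v = 1 ∨ a v = -1)
    (hi : i = 1 ∨ i = -1) (hS : IsSubarena E S) {W : Set V} {τ₀ : V → V}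
    (hW : IsDominion E a p S W (-i) τ₀)
    (hrest : PositionallyDetermined E a p (S \ attractor E a S W (-i)) i) :
    PositionallyDetermined E a p S i := by
  classical
  set A := attractor E a S W (-i)
  obtain ⟨σ₀, hσ₀⟩ := hS.exists_isStrategyIn (a := a) i
  obtain ⟨τA, hτAS, hτA⟩ := hS.exists_isAttractorStrategy (a := a) W (-i)
  obtain ⟨σ'', τ'', hσ'', hτ'', hsplit⟩ := hrest
  set τ := (S \ A).piecewise τ'' (W.piecewise τ₀ τA)
  have hWA : W ⊆ A := fun w hw => inter_subset_attractor ⟨hW.subset hw, hw⟩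
  have hwinW : ∀ w ∈ W, WinsIn E a p S (-i) τ w := fun w hw =>
    WinsIn.of_isOpponentTrap hW.isOpponentTrap hW.isStrategyIn
      (fun u hu => (piecewise_eq_of_notMem _ _ _ fun h => h.2 (hWA hu)).trans
        (piecewise_eq_of_mem _ _ _ hu)) hw (hW.winsIn w hw)
  have hwinA : ∀ u ∈ A, WinsIn E a p S (-i) τ u := fun u hu =>
    hτA.winsIn (fun u hu => (piecewise_eq_of_notMem _ _ _ fun h => h.2 hu.1).trans
      (piecewise_eq_of_notMem _ _ _ hu.2)) hwinW hu
  refine ⟨(S \ A).piecewise σ'' σ₀, τ, hσ''.piecewise sdiff_subset hσ₀,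
    hτ''.piecewise sdiff_subset (hW.isStrategyIn.piecewise hW.subset hτAS), fun v hv => ?_⟩
  by_cases hvA : v ∈ A
  · exact .inr (hwinA v hvA)
  rcases hsplit v ⟨hv, hvA⟩ with h | h
  · have htrap : IsOpponentTrap E a S (S \ A) i := by
      simpa using isOpponentTrap_sdiff_attractor (E := E) (S := S) (N := W) (i := -i) ha (by omega)
    exact .inl (h.of_isOpponentTrap htrap hσ'' (piecewise_eqOn _ _ _) ⟨hv, hvA⟩)
  · exact .inr (h.of_sdiff hwinA (piecewise_eqOn _ _ _))

theorem IsSubarena.positionallyDetermined [Finite V] (ha : ∀ v, a v = 1 ∨ a v = -1)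
    (hS : IsSubarena E S) (hi : i = 1 ∨ i = -1) : PositionallyDetermined E a p S i := by
  induction S using WellFoundedLT.induction generalizing i with
  | _ S ih => ?_
  rcases S.eq_empty_or_nonempty with rfl | hne
  · exact positionallyDetermined_empty
  obtain ⟨x, hxS, hmax⟩ := S.exists_max_image p S.toFinite hne
  set i₀ : ℤ := if Odd (p x) then 1 else -1
  have hi₀ : i₀ = 1 ∨ i₀ = -1 := by by_cases h : Odd (p x) <;> simp [i₀, h]
  suffices h : PositionallyDetermined E a p S i₀ by
    rcases (by omega : i = i₀ ∨ i = -i₀) with rfl | rfl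
    exacts [h, h.neg]
  set N := {v ∈ S | p v = p x}
  set A := attractor E a S N i₀
  have hA : S \ A ⊂ S := sdiff_attractor_ssubset ⟨x, hxS, hxS, rfl⟩
  obtain ⟨σ', τ', hσ', hτ', hsplit⟩ := ih _ hA hS.sdiff_attractor hi₀
  set W := winRegion E a p (S \ A) (-i₀) τ'
  by_cases hWne : W.Nonempty
  · have hD : IsDominion E a p S W (-i₀) τ' :=
      isDominion_winRegion (isOpponentTrap_sdiff_attractor ha hi₀) sdiff_subset hτ'
    refine hS.positionallyDetermined_of_isDominion ha hi₀ hD (ih _ ?_ hS.sdiff_attractor hi₀)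
    exact sdiff_attractor_ssubset (hWne.mono fun w hw => ⟨hD.subset hw, hw⟩)
  · have hσwin : ∀ v ∈ S \ A, WinsIn E a p (S \ A) i₀ σ' v := fun v hv =>
      (hsplit v hv).resolve_right fun h => hWne ⟨v, hv, h⟩
    obtain ⟨σ, hσ, hwin⟩ := hS.exists_winsIn_of_attractor (fun f hfS hfN =>
      winsPlay_of_frequently_eq (fun t => hmax _ (hfS t)) (hfN.mono fun _ ht => ht.2)) hσ' hσwin
    obtain ⟨τ, hτ⟩ := hS.exists_isStrategyIn (a := a) (-i₀)
    exact ⟨σ, τ, hσ, hτ, fun v hv => .inl (hwin v hv)⟩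

end Zielonka

section Determinacy

variable {i : ℤ} {v : V}

def jointPlay (a : V → ℤ) (i : ℤ) (σ τ : List V → V → V) (v : V) : ℕ → V × List V
  | 0 => (v, [])
  | t + 1 =>
    let x := jointPlay a i σ τ v t
    (if a x.1 = i then σ x.2 x.1 else τ x.2 x.1, x.2 ++ [x.1])

theorem jointPlay_snd (σ τ : List V → V → V) (t : ℕ) :
    (jointPlay a i σ τ v t).2 = List.ofFn fun j : Fin t => (jointPlay a i σ τ v j).1 := by
  induction t with
  | zero => rfl
  | succ t ih =>
    show (jointPlay a i σ τ v t).2 ++ [(jointPlay a i σ τ v t).1] = _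
    rw [ih, List.ofFn_succ_last]
    rfl

theorem exists_isPlay_consistentPlay (ha : ∀ v, a v = 1 ∨ a v = -1) (hi : i = 1 ∨ i = -1)
    {σ τ : List V → V → V} (hσ : IsStrategy E a i σ) (hτ : IsStrategy E a (-i) τ) (v : V) :
    ∃ f, IsPlay E v f ∧ ConsistentPlay a i σ f ∧ ConsistentPlay a (-i) τ f := by
  refine ⟨fun t => (jointPlay a i σ τ v t).1, ⟨rfl, fun t => ?_⟩, fun t hat => ?_, fun t hat => ?_⟩
  · show E _ (if _ then _ else _)
    split_ifs with hat
    exacts [hσ _ _ hat, hτ _ _ (eq_of_ne_neg (ha _) (by omega) (by rwa [neg_neg]))]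
  · show (if _ then _ else _) = _
    rw [if_pos hat, jointPlay_snd]
  · have hne : a (jointPlay a i σ τ v t).1 ≠ i := fun h => by
      have : i = -i := h.symm.trans hat
      omega
    show (if _ then _ else _) = _
    rw [if_neg hne, jointPlay_snd]

theorem WinningFrom.not_neg (ha : ∀ v, a v = 1 ∨ a v = -1) (hi : i = 1 ∨ i = -1)
    (h : WinningFrom E a p i v) : ¬ WinningFrom E a p (-i) v := by
  rintro ⟨τ, hτ, hτwin⟩
  obtain ⟨σ, hσ, hσwin⟩ := h
  obtain ⟨f, hf, hfσ, hfτ⟩ := exists_isPlay_consistentPlay ha hi hσ hτ v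
  exact (hσwin f hf hfσ).not_neg hi (hτwin f hf hfτ)

theorem MemorylessWinningFrom.winningFrom (h : MemorylessWinningFrom E a p i v) :
    WinningFrom E a p i v :=
  let ⟨σ, hσ, hwin⟩ := h
  ⟨fun _ => σ, fun _ => hσ, hwin⟩

theorem WinsIn.memorylessWinningFrom {σ : V → V} (hσ : IsStrategyIn E a univ i σ)
    (h : WinsIn E a p univ i σ v) : MemorylessWinningFrom E a p i v :=
  ⟨σ, fun w hw => (hσ w (mem_univ w) hw).1, fun f hf hc => h f hf (fun _ => mem_univ _) hc⟩

theorem exists_memorylessWinningFrom [Finite V] (hE : ∀ v, ∃ w, E v w)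
    (ha : ∀ v, a v = 1 ∨ a v = -1) (v : V) :
    ∃ i : ℤ, (i = 1 ∨ i = -1) ∧ MemorylessWinningFrom E a p i v := by
  have huniv : IsSubarena E univ := fun v _ => (hE v).imp fun w hw => ⟨mem_univ w, hw⟩
  obtain ⟨σ, τ, hσ, hτ, hwin⟩ := huniv.positionallyDetermined (p := p) ha (i := 1) (.inl rfl)
  rcases hwin v (mem_univ v) with h | h
  exacts [⟨1, .inl rfl, h.memorylessWinningFrom hσ⟩, ⟨-1, .inr rfl, h.memorylessWinningFrom hτ⟩]

end Determinacy

end ParityGame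

theorem parityGame_determinacy_general {V : Type*} [Fintype V]
    (E : V → V → Prop) (a : V → ℤ) (p : V → ℕ)
    (hE : ∀ v, ∃ w, E v w) (ha : ∀ v, a v = 1 ∨ a v = -1) (v : V) :
    ∃ i : ℤ, (i = 1 ∨ i = -1) ∧
      WinningFrom E a p i v ∧ ¬ WinningFrom E a p (-i) v ∧
      MemorylessWinningFrom E a p i v := by
  obtain ⟨i, hi, hwin⟩ := exists_memorylessWinningFrom hE ha v
  exact ⟨i, hi, hwin.winningFrom, hwin.winningFrom.not_neg ha hi, hwin⟩

/-- In every finite parity game, for every node `v` exactly one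
of the two players has a winning strategy from `v`, and this winner moreover has
a memoryless winning strategy from `v`. -/
theorem parityGame_determinacy {V : Type*} [Fintype V] [Nonempty V]
    (E : V → V → Prop) (a : V → ℤ) (p : V → ℕ)
    (hE : ∀ v, ∃ w, E v w) (ha : ∀ v, a v = 1 ∨ a v = -1) (v : V) :
    ∃ i : ℤ, (i = 1 ∨ i = -1) ∧
      WinningFrom E a p i v ∧ ¬ WinningFrom E a p (-i) v ∧
      MemorylessWinningFrom E a p i v :=
  parityGame_determinacy_general E a p hE ha v
end

section
/- Let N, K, d be natural numbers with 1 ≤ d ≤ K ≤ N. Then the hypergeometric distribution with parameters (N, K, d) stochastically dominates (in the strong stochastic order) the binomial distribution with parameters (d, (K-d)/N): for every z ∈ ℕ, ∑_{j=0}^{z} C(K,j)·C(N-K,d-j)/C(N,d) ≤ ∑_{j=0}^{z} C(d,j)·((K-d)/N)^j·(1-(K-d)/N)^{d-j}. -/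
/-!
Condition on the colour of the first ball. With `B` black and `R` red balls, the hypergeometric
CDF for `d + 1` draws is the mixture, with weights `B / (B + R)` and `R / (B + R)`, of the CDFs for
`d` draws from the urns with one black, resp. one red, ball removed; likewise the Binomial
`(d + 1, p)` CDF is the `(p, 1 - p)`-mixture of Binomial `(d, p)` CDFs at `w` and `w + 1`. By
induction each smaller urn is dominated by a binomial whose parameter is at least
`p = (B - d - 1) / (B + R)`, and the binomial CDF is antitone in the parameter. Since the black
weight `B / (B + R)` exceeds `p` and the binomial CDF is monotone in `w`, shifting weight from the
`w + 1` term to the `w` term only lowers the mixture, which closes the induction.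
-/

open Finset

/-- `binomCdf d p z` is `P(X < z)` for `X ~ Binomial(d, p)`: the sum stops *before* `z`. -/
noncomputable def binomCdf (d : ℕ) (p : ℝ) (z : ℕ) : ℝ :=
  ∑ j ∈ range z, (d.choose j : ℝ) * p ^ j * (1 - p) ^ (d - j)

@[simp] lemma binomCdf_zero_right (d : ℕ) (p : ℝ) : binomCdf d p 0 = 0 := by
  simp [binomCdf]

@[simp] lemma binomCdf_zero_succ (p : ℝ) (w : ℕ) : binomCdf 0 p (w + 1) = 1 := by
  simp [binomCdf, sum_range_succ']

lemma binomCdf_succ_succ (d : ℕ) (p : ℝ) (w : ℕ) :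
    binomCdf (d + 1) p (w + 1) = p * binomCdf d p w + (1 - p) * binomCdf d p (w + 1) := by
  have pascal : ∀ j, ((d + 1).choose (j + 1) : ℝ) * p ^ (j + 1) * (1 - p) ^ (d + 1 - (j + 1)) =
      p * ((d.choose j : ℝ) * p ^ j * (1 - p) ^ (d - j)) +
        (1 - p) * ((d.choose (j + 1) : ℝ) * p ^ (j + 1) * (1 - p) ^ (d - (j + 1))) := by
    intro j
    rw [Nat.choose_succ_succ', Nat.cast_add, Nat.add_sub_add_right]
    rcases lt_or_ge j d with hj | hj
    · rw [show d - j = d - (j + 1) + 1 by omega]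
      ring
    · simp [Nat.choose_eq_zero_of_lt (show d < j + 1 by omega)]
      ring
  unfold binomCdf
  rw [sum_range_succ', sum_range_succ' _ w, sum_congr rfl fun j _ => pascal j, sum_add_distrib,
    mul_add, mul_sum, mul_sum]
  simp only [Nat.choose_zero_right, Nat.cast_one, pow_zero, mul_one, tsub_zero, one_mul]
  ring

lemma binomCdf_mono {d : ℕ} {p : ℝ} (hp₀ : 0 ≤ p) (hp₁ : p ≤ 1) : Monotone (binomCdf d p) := by
  intro z z' hz
  have : 0 ≤ 1 - p := by linarith
  exact sum_le_sum_of_subset_of_nonneg (range_subset_range.2 hz) fun j _ _ => by positivity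

lemma le_binomCdf_succ_succ {d w : ℕ} {p q x y : ℝ} (hp : 0 ≤ p) (hpq : p ≤ q) (hq : q ≤ 1)
    (hx : x ≤ binomCdf d p w) (hy : y ≤ binomCdf d p (w + 1)) :
    q * x + (1 - q) * y ≤ binomCdf (d + 1) p (w + 1) := by
  have hstep : binomCdf d p w ≤ binomCdf d p (w + 1) :=
    binomCdf_mono hp (hpq.trans hq) w.le_succ
  rw [binomCdf_succ_succ]
  calc q * x + (1 - q) * y
      ≤ q * binomCdf d p w + (1 - q) * binomCdf d p (w + 1) := by
        have : 0 ≤ q := hp.trans hpq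
        gcongr
    _ ≤ p * binomCdf d p w + (1 - p) * binomCdf d p (w + 1) := by
        nlinarith [mul_le_mul_of_nonneg_left hstep (sub_nonneg.2 hpq)]

lemma binomCdf_anti {p q : ℝ} (hp : 0 ≤ p) (hpq : p ≤ q) (hq : q ≤ 1) (d z : ℕ) :
    binomCdf d q z ≤ binomCdf d p z := by
  induction d generalizing z with
  | zero => rcases z with _ | w <;> simp
  | succ d ih =>
    rcases z with _ | w
    · simp
    · rw [binomCdf_succ_succ]
      exact le_binomCdf_succ_succ hp hpq hq (ih w) (ih (w + 1))

lemma succ_mul_choose_succ (n k : ℕ) : (k + 1) * n.choose (k + 1) = n * (n - 1).choose k := by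
  rcases n with _ | n
  · simp
  · rw [Nat.add_sub_cancel, Nat.add_one_mul_choose_eq, mul_comm]

/-- The number of `d`-subsets of an urn with `B` black and `R` red balls containing fewer than `z`
black balls. The `if` discards `j > d`, where the truncated `d - j = 0` would give
`R.choose 0 = 1`. -/
def hyperCount (B R d z : ℕ) : ℕ :=
  ∑ j ∈ range z, if j ≤ d then B.choose j * R.choose (d - j) else 0

lemma hyperCount_succ_succ (B R d w : ℕ) :
    (d + 1) * hyperCount B R (d + 1) (w + 1) =
      B * hyperCount (B - 1) R d w + R * hyperCount B (R - 1) d (w + 1) := by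
  have first : (d + 1) * R.choose (d + 1) = R * (R - 1).choose d := succ_mul_choose_succ R d
  have shifted : ∀ j, (d + 1) *
      (if j + 1 ≤ d + 1 then B.choose (j + 1) * R.choose (d + 1 - (j + 1)) else 0) =
      B * (if j ≤ d then (B - 1).choose j * R.choose (d - j) else 0) +
        R * (if j + 1 ≤ d then B.choose (j + 1) * (R - 1).choose (d - (j + 1)) else 0) := by
    intro j
    rw [Nat.add_sub_add_right]
    rcases lt_trichotomy j d with hj | rfl | hj
    · obtain ⟨e, he⟩ : ∃ e, d - j = e + 1 := ⟨d - (j + 1), by omega⟩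
      rw [if_pos (by omega), if_pos (by omega), if_pos (by omega), he,
        show d - (j + 1) = e by omega, show d + 1 = (j + 1) + (e + 1) by omega]
      calc (j + 1 + (e + 1)) * (B.choose (j + 1) * R.choose (e + 1))
          = (j + 1) * B.choose (j + 1) * R.choose (e + 1) +
              B.choose (j + 1) * ((e + 1) * R.choose (e + 1)) := by ring
        _ = _ := by rw [succ_mul_choose_succ, succ_mul_choose_succ]; ring
    · simp [succ_mul_choose_succ]
    · simp [show ¬ j ≤ d by omega, show ¬ j + 1 ≤ d by omega]
  unfold hyperCount
  rw [sum_range_succ', sum_range_succ' _ w, mul_add, mul_add, mul_sum, mul_sum, mul_sum,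
    sum_congr rfl fun j _ => shifted j, sum_add_distrib]
  simp only [mul_ite, mul_zero, Order.add_one_le_iff, le_add_iff_nonneg_left, zero_le,
    ↓reduceIte, Nat.choose_zero_right, tsub_zero, one_mul, first]
  ring

noncomputable def hyperCdf (B R d z : ℕ) : ℝ :=
  hyperCount B R d z / (B + R).choose d

lemma hyperCdf_succ_succ {B R d : ℕ} (h : d < B + R) (w : ℕ) :
    hyperCdf B R (d + 1) (w + 1) =
      B / (B + R) * hyperCdf (B - 1) R d w + R / (B + R) * hyperCdf B (R - 1) d (w + 1) := by
  have hB : (B : ℝ) * hyperCdf (B - 1) R d w =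
      B * hyperCount (B - 1) R d w / (B + R - 1).choose d := by
    rcases B with _ | B
    · simp
    · simp [hyperCdf, mul_div_assoc, Nat.add_right_comm]
  have hR : (R : ℝ) * hyperCdf B (R - 1) d (w + 1) =
      R * hyperCount B (R - 1) d (w + 1) / (B + R - 1).choose d := by
    rcases R with _ | R
    · simp
    · simp [hyperCdf, mul_div_assoc, ← add_assoc]
  have hcount : ((d + 1) * hyperCount B R (d + 1) (w + 1) : ℝ) =
      B * hyperCount (B - 1) R d w + R * hyperCount B (R - 1) d (w + 1) := by
    exact_mod_cast hyperCount_succ_succ B R d w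
  have hden : ((d + 1) * (B + R).choose (d + 1) : ℝ) = (B + R) * (B + R - 1).choose d := by
    exact_mod_cast succ_mul_choose_succ (B + R) d
  have hpos : (0 : ℝ) < (B + R - 1).choose d := by exact_mod_cast Nat.choose_pos (by omega)
  have hpos' : (0 : ℝ) < (B + R).choose (d + 1) := by exact_mod_cast Nat.choose_pos h
  have hn : (0 : ℝ) < B + R := by exact_mod_cast (Nat.zero_lt_of_lt h)
  rw [div_mul_eq_mul_div, div_mul_eq_mul_div, hB, hR, hyperCdf]
  field_simp
  linear_combination
    ((B + R).choose (d + 1) : ℝ) * hcount - (hyperCount B R (d + 1) (w + 1) : ℝ) * hden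

@[simp] lemma hyperCdf_zero_right (B R d : ℕ) : hyperCdf B R d 0 = 0 := by
  simp [hyperCdf, hyperCount]

@[simp] lemma hyperCdf_zero_succ (B R w : ℕ) : hyperCdf B R 0 (w + 1) = 1 := by
  simp [hyperCdf, hyperCount]

theorem hyperCdf_le_binomCdf {B R d : ℕ} (hd : d ≤ B) (z : ℕ) :
    hyperCdf B R d z ≤ binomCdf d ((B - d) / (B + R)) z := by
  induction d generalizing B R z with
  | zero => rcases z with _ | w <;> simp
  | succ d ih =>
    rcases z with _ | w
    · simp
    have hdB : (d : ℝ) + 1 ≤ B := by exact_mod_cast hd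
    have hR : (0 : ℝ) ≤ R := R.cast_nonneg
    have hd₀ : (0 : ℝ) ≤ d := d.cast_nonneg
    have hn : (0 : ℝ) < B + R := by linarith
    rw [show (B : ℝ) - (d + 1 : ℕ) = B - 1 - d by push_cast; ring]
    set p : ℝ := (B - 1 - d) / (B + R) with hp
    have hp₀ : 0 ≤ p := div_nonneg (by linarith) hn.le
    have hpq : p ≤ B / (B + R) := div_le_div_of_nonneg_right (by linarith) hn.le
    have hq : (B : ℝ) / (B + R) ≤ 1 := div_le_one_of_le₀ (by simp) hn.le
    have hweight : (R : ℝ) / (B + R) = 1 - B / (B + R) := by field_simp; ring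
    have hblack : p ≤ ((B - 1 : ℕ) - d) / ((B - 1 : ℕ) + R) ∧
        ((B - 1 : ℕ) - d : ℝ) / ((B - 1 : ℕ) + R) ≤ 1 := by
      rw [Nat.cast_pred (by omega)]
      refine ⟨?_, div_le_one_of_le₀ (by linarith) (by linarith)⟩
      rcases hdB.eq_or_lt with hB | hB
      · simp [hp, ← hB]
      · exact div_le_div_of_nonneg_left (by linarith) (by linarith) (by linarith)
    have hred : p ≤ (B - d) / (B + (R - 1 : ℕ)) ∧ ((B : ℝ) - d) / (B + (R - 1 : ℕ)) ≤ 1 := by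
      have hR' : ((R - 1 : ℕ) : ℝ) ≤ R := Nat.cast_le.2 (R.sub_le 1)
      have hR'₀ : (0 : ℝ) ≤ (R - 1 : ℕ) := Nat.cast_nonneg _
      refine ⟨?_, div_le_one_of_le₀ (by linarith) (by linarith)⟩
      calc p ≤ (B - d) / (B + R) := div_le_div_of_nonneg_right (by linarith) hn.le
        _ ≤ (B - d) / (B + (R - 1 : ℕ)) :=
          div_le_div_of_nonneg_left (by linarith) (by linarith) (by linarith)
    rw [hyperCdf_succ_succ (by omega), hweight]
    apply le_binomCdf_succ_succ hp₀ hpq hq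
    · exact (ih (by omega) w).trans (binomCdf_anti hp₀ hblack.1 hblack.2 d w)
    · exact (ih (by omega) (w + 1)).trans (binomCdf_anti hp₀ hred.1 hred.2 d (w + 1))

theorem hypergeometric_dominates_binomial_general (N K d : ℕ)
    (hK : d ≤ K) (hN : K ≤ N) (z : ℕ) :
    ∑ j ∈ Finset.range (z + 1),
        (if j ≤ d then
          ((K.choose j : ℝ) * ((N - K).choose (d - j) : ℝ)) / (N.choose d : ℝ)
         else 0)
      ≤ ∑ j ∈ Finset.range (z + 1),
          (d.choose j : ℝ) * (((K : ℝ) - d) / N) ^ j *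
            (1 - ((K : ℝ) - d) / N) ^ (d - j) := by
  obtain ⟨R, rfl⟩ := Nat.exists_eq_add_of_le hN
  convert hyperCdf_le_binomCdf (R := R) hK (z + 1) using 1
  · simp [hyperCdf, hyperCount, sum_div, ite_div]
  · simp [binomCdf]

/-- For `1 ≤ d ≤ K ≤ N`, the Hypergeometric`(N, K, d)`
distribution stochastically dominates the Binomial`(d, (K-d)/N)` distribution in
the strong stochastic order: for every `z : ℕ`, the CDF of the hypergeometric at
`z` is at most the CDF of the binomial at `z`. (The hypergeometric mass at `j`
is `C(K,j)·C(N-K,d-j)/C(N,d)`, understood to be `0` for `j > d`.) -/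
theorem hypergeometric_dominates_binomial (N K d : ℕ)
    (hd : 1 ≤ d) (hK : d ≤ K) (hN : K ≤ N) (z : ℕ) :
    ∑ j ∈ Finset.range (z + 1),
        (if j ≤ d then
          ((K.choose j : ℝ) * ((N - K).choose (d - j) : ℝ)) / (N.choose d : ℝ)
         else 0)
      ≤ ∑ j ∈ Finset.range (z + 1),
          (d.choose j : ℝ) * (((K : ℝ) - d) / N) ^ j *
            (1 - ((K : ℝ) - d) / N) ^ (d - j) :=
  hypergeometric_dominates_binomial_general N K d hK hN z
end

section
/- Let f : ℕ → ℕ satisfy 1 ≤ f(n) ≤ n for all n and f(n) → ∞ as n → ∞, and let 𝒫 be a probability distribution on ℕ with 𝒫({even numbers}) = 𝒫({odd numbers}) = 1/2. For each n, sample a parity game from the random model G(n, f(n)) and fix the node v = 0 ∈ Fin n. Then the probability that the owner a(v) of v has a winning strategy from v tends to 1 as n → ∞. -/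
open MeasureTheory

instance (n : ℕ) : MeasurableSpace (Finset (Fin n)) := ⊤

/-- The uniform probability measure on a finite set `s`. -/
noncomputable def uniformFinset {α : Type*} [MeasurableSpace α] (s : Finset α) :
    Measure α :=
  (s.card : ENNReal)⁻¹ • ∑ x ∈ s, Measure.dirac x

/-- A sample of the random parity game model on node set `Fin n`: the set of
successors of each node, the owner (`±1`) of each node, and the priority of each
node. -/
abbrev GameSample (n : ℕ) : Type :=
  (Fin n → Finset (Fin n)) × (Fin n → ℤ) × (Fin n → ℕ)

/-- The law of the random parity game model `G(n,d)` with priority distribution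
`P`: independently for each node, its set of successors is a uniformly random
`d`-element subset of `Fin n`; independently, each node's owner is drawn i.i.d.
uniformly from `{-1,+1}`, and each node's priority is drawn i.i.d. from `P`. -/
noncomputable def gameMeasure (n d : ℕ) (P : Measure ℕ) : Measure (GameSample n) :=
  (Measure.pi fun _ : Fin n => uniformFinset (Finset.powersetCard d Finset.univ)).prod
    ((Measure.pi fun _ : Fin n => uniformFinset ({-1, 1} : Finset ℤ)).prod
      (Measure.pi fun _ : Fin n => P))

/-- The edge relation of a sampled game: `(u, w) ∈ E` iff `w` is one of the
chosen successors of `u`. -/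
def sampleE {n : ℕ} (ω : GameSample n) : Fin n → Fin n → Prop :=
  fun u w => w ∈ ω.1 u

/-!
Let `i` be the owner of `0` and `T` the set of the other nodes that `i` owns and whose priority
has `i`'s parity. If `0` has a successor in the core of `T` (the largest subset of `T` in which
every node has a successor), then `i` wins from `0` by moving into the core and staying there.

By Hoeffding's inequality `|T| ≥ n/8` except with probability `O(e^{-n/32})`. If the core has
at most `|T|/2` nodes, repeatedly discarding a node without successor in the rest of `T` yields
`W ⊆ T` of size `⌈|T|/2⌉` none of whose nodes has a successor in `T \ W`; a union bound shows
this has probability at most `4q`, where `q ≤ (31/32)^d` is the probability that a random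
`d`-set misses `n/16` given nodes. Otherwise the core has at least `n/16` nodes and does not
depend on the successors of `0`, which therefore miss it with probability at most `q`.
-/

open Finset Filter Topology ProbabilityTheory
open scoped ENNReal

theorem Nat.choose_mul_pow_le_choose_mul_pow {a b : ℕ} (hab : a ≤ b) (d : ℕ) :
    a.choose d * b ^ d ≤ b.choose d * a ^ d := by
  induction d with
  | zero => simp
  | succ d ih =>
    have hsub : (a - d) * b ≤ (b - d) * a := by
      rw [Nat.sub_mul, Nat.sub_mul, mul_comm b a]
      exact Nat.sub_le_sub_left (Nat.mul_le_mul_left d hab) _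
    refine Nat.le_of_mul_le_mul_right (c := d + 1) ?_ d.succ_pos
    calc a.choose (d + 1) * b ^ (d + 1) * (d + 1)
        = a.choose d * b ^ d * ((a - d) * b) := by
          rw [pow_succ, mul_right_comm, Nat.choose_succ_right_eq]; ring
      _ ≤ b.choose d * a ^ d * ((b - d) * a) := Nat.mul_le_mul ih hsub
      _ = b.choose (d + 1) * a ^ (d + 1) * (d + 1) := by
          rw [pow_succ, mul_right_comm (b.choose (d + 1)), Nat.choose_succ_right_eq]; ring

namespace Finset

variable {α : Type*} [DecidableEq α]

def SuccClosed (S : α → Finset α) (D : Finset α) : Prop :=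
  ∀ w ∈ D, (S w ∩ D).Nonempty

def Peelable (S : α → Finset α) (T : Finset α) (r : ℕ) : Prop :=
  ∃ W ∈ T.powersetCard r, ∀ w ∈ W, Disjoint (S w) (T \ W)

instance (S : α → Finset α) : DecidablePred (SuccClosed S) := fun D => by
  unfold SuccClosed; infer_instance

/-- The largest `SuccClosed` subset of `T`. -/
def core (S : α → Finset α) (T : Finset α) : Finset α :=
  {D ∈ T.powerset | SuccClosed S D}.sup id

variable {S S' : α → Finset α} {T D : Finset α}

theorem mem_core {w : α} : w ∈ core S T ↔ ∃ D ⊆ T, SuccClosed S D ∧ w ∈ D := by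
  simp [core, mem_sup, and_assoc]

theorem core_subset : core S T ⊆ T := fun _ hw => by
  obtain ⟨D, hDT, -, hwD⟩ := mem_core.1 hw
  exact hDT hwD

theorem subset_core (hDT : D ⊆ T) (hD : SuccClosed S D) : D ⊆ core S T := fun _ hw =>
  mem_core.2 ⟨D, hDT, hD, hw⟩

theorem succClosed_core : SuccClosed S (core S T) := by
  intro w hw
  obtain ⟨D, hDT, hD, hwD⟩ := mem_core.1 hw
  exact (hD w hwD).mono (inter_subset_inter_left (subset_core hDT hD))

theorem core_congr (h : ∀ w ∈ T, S w = S' w) : core S T = core S' T := by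
  unfold core
  congr 1
  refine filter_congr fun D hD => forall₂_congr fun w hw => ?_
  rw [h w (mem_powerset.1 hD hw)]

theorem peelable_of_forall_card_add_le (r : ℕ) (h : ∀ D ⊆ T, SuccClosed S D → #D + r ≤ #T) :
    Peelable S T r := by
  induction r with
  | zero => exact ⟨∅, by simp⟩
  | succ r ih =>
    obtain ⟨W, hW, hWS⟩ := ih fun D hDT hD => by have := h D hDT hD; omega
    obtain ⟨hWT, hWcard⟩ := mem_powersetCard.1 hW
    have hrT : r + 1 ≤ #T := by simpa using h ∅ (empty_subset _) (by simp [SuccClosed])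
    have hnot : ¬ SuccClosed S (T \ W) := fun hcl => by
      have := h _ sdiff_subset hcl
      rw [card_sdiff_of_subset hWT] at this
      omega
    simp only [SuccClosed, not_forall, not_nonempty_iff_eq_empty, exists_prop] at hnot
    obtain ⟨w, hw, hwS⟩ := hnot
    obtain ⟨hwT, hwW⟩ := mem_sdiff.1 hw
    refine ⟨insert w W, mem_powersetCard.2 ⟨insert_subset hwT hWT, ?_⟩, ?_⟩
    · rw [card_insert_of_notMem hwW, hWcard]
    · have hsub : T \ insert w W ⊆ T \ W := sdiff_subset_sdiff le_rfl (subset_insert _ _)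
      intro u hu
      rcases mem_insert.1 hu with rfl | hu
      · exact (disjoint_iff_inter_eq_empty.2 hwS).mono_right hsub
      · exact (hWS u hu).mono_right hsub

theorem card_lt_card_core_add {r : ℕ} (h : ¬ Peelable S T r) :
    #T < #(core S T) + r := by
  by_contra! hc
  exact h (peelable_of_forall_card_add_le r fun D hDT hD => (Nat.add_le_add_right
    (card_le_card (subset_core hDT hD)) r).trans hc)

end Finset

theorem Nat.limsup_mem_of_eventually_mem {g : ℕ → ℕ} {s : Finset ℕ}
    (h : ∀ᶠ t in atTop, g t ∈ s) : atTop.limsup g ∈ s := by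
  have hbdd : IsBoundedUnder (· ≤ ·) atTop g :=
    ⟨s.sup id, h.mono fun t ht => Finset.le_sup (f := id) ht⟩
  have hle : ∀ᶠ t in atTop, g t ≤ atTop.limsup g :=
    eventually_lt_of_limsup_lt (Nat.lt_succ_self _) hbdd |>.mono fun _ => Nat.le_of_lt_succ
  have hge : ∃ᶠ t in atTop, atTop.limsup g ≤ g t := by
    rcases Nat.eq_zero_or_pos (atTop.limsup g) with h0 | hpos
    · exact Frequently.of_forall fun t => h0 ▸ Nat.zero_le _
    · exact (frequently_lt_of_lt_limsup (by isBoundedDefault) (Nat.sub_one_lt hpos.ne')).mono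
        fun _ => Nat.le_of_pred_lt
  obtain ⟨t, hgt, hts, hlt⟩ := (hge.and_eventually (h.and hle)).exists
  exact le_antisymm hlt hgt ▸ hts

/-- `WinsPlay p i f` unfolds to `ParityFor i (playLimsup p f)`. -/
def ParityFor (i : ℤ) (k : ℕ) : Prop := if i = 1 then Odd k else Even k

theorem winningFrom_of_trap {V : Type*} {E : V → V → Prop} {a : V → ℤ} {p : V → ℕ} {i : ℤ}
    {v : V} (C : Finset V) (hv : a v = i) (hmove : ∀ w, a w = i → ∃ u, E w u)
    (hown : ∀ w ∈ C, a w = i) (hpar : ∀ w ∈ C, ParityFor i (p w))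
    (hclosed : ∀ w ∈ C, ∃ u ∈ C, E w u) (henter : ∃ u ∈ C, E v u) :
    WinningFrom E a p i v := by
  classical
  let next : V → V := fun w =>
    if h : ∃ u ∈ C, E w u then h.choose else
      if h' : ∃ u, E w u then h'.choose else w
  have hnext : ∀ w, (∃ u ∈ C, E w u) → next w ∈ C ∧ E w (next w) := fun w hw => by
    simp only [next, dif_pos hw]; exact hw.choose_spec
  refine ⟨fun _ => next, fun _ w hw => ?_, fun f hplay hcons => ?_⟩
  · by_cases hC : ∃ u ∈ C, E w u
    · exact (hnext w hC).2
    · simp only [next, dif_neg hC, dif_pos (hmove w hw)]; exact (hmove w hw).choose_spec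
  have hstay : ∀ t, f (t + 1) ∈ C := by
    intro t
    induction t with
    | zero =>
      rw [hcons 0 (hplay.1 ▸ hv)]
      exact (hnext _ (hplay.1 ▸ henter)).1
    | succ t ih =>
      rw [hcons (t + 1) (hown _ ih)]
      exact (hnext _ (hclosed _ ih)).1
  have hmem : ∀ᶠ t in atTop, p (f t) ∈ C.image p :=
    eventually_atTop.2 ⟨1, fun t ht => by
      obtain ⟨s, rfl⟩ := Nat.exists_eq_add_of_le' ht
      exact Finset.mem_image_of_mem p (hstay s)⟩
  obtain ⟨w, hw, hpw⟩ := Finset.mem_image.1 (Nat.limsup_mem_of_eventually_mem hmem)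
  show ParityFor i (playLimsup p f)
  rw [playLimsup, ← hpw]
  exact hpar w hw

section UniformFinset

variable {α : Type*} [MeasurableSpace α] [MeasurableSingletonClass α] {s t : Finset α}
  {A : Set α}

theorem uniformFinset_apply_eq_card_div (ht : ∀ x, x ∈ t ↔ x ∈ s ∧ x ∈ A) :
    uniformFinset s A = #t / #s := by
  classical
  have hts : t ⊆ s := fun x hx => ((ht x).1 hx).1
  have hdirac : ∀ x ∈ s, Measure.dirac x A = if x ∈ t then 1 else 0 := fun x hx => by
    by_cases hxA : x ∈ A <;> simp [Measure.dirac_apply, hxA, ht, hx]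
  rw [uniformFinset, Measure.smul_apply, Measure.finsetSum_apply, sum_congr rfl hdirac,
    sum_boole, filter_mem_eq_inter, inter_eq_right.2 hts, smul_eq_mul, ENNReal.div_eq_inv_mul]

theorem uniformFinset_eq_zero (h : ∀ x ∈ s, x ∉ A) : uniformFinset s A = 0 := by
  rw [uniformFinset_apply_eq_card_div (t := ∅) fun x => by simpa using h x]
  simp

instance : IsFiniteMeasure (uniformFinset s) :=
  ⟨by
    rw [uniformFinset_apply_eq_card_div (t := s) (by simp)]
    exact ENNReal.div_self_le_one.trans_lt ENNReal.one_lt_top⟩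

theorem isProbabilityMeasure_uniformFinset (hs : s.Nonempty) :
    IsProbabilityMeasure (uniformFinset s) :=
  ⟨by rw [uniformFinset_apply_eq_card_div (t := s) (by simp), ENNReal.div_self (by simpa using
    hs.ne_empty) (ENNReal.natCast_ne_top _)]⟩

end UniformFinset

/-- The probability that a uniformly random `d`-subset of an `N`-element set misses a given
`u`-element subset. -/
noncomputable def missProb (N u d : ℕ) : ℝ≥0∞ := (N - u).choose d / N.choose d

theorem missProb_anti {N u u' d : ℕ} (h : u ≤ u') : missProb N u' d ≤ missProb N u d := by
  unfold missProb
  gcongr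

theorem uniformFinset_powersetCard_disjoint {α : Type*} [Fintype α] [DecidableEq α]
    [MeasurableSpace (Finset α)] [MeasurableSingletonClass (Finset α)] (d : ℕ) (U : Finset α) :
    uniformFinset (powersetCard d univ) {s | Disjoint s U} =
      missProb (Fintype.card α) #U d := by
  rw [uniformFinset_apply_eq_card_div (t := powersetCard d Uᶜ) fun s => by
    simp [mem_powersetCard, subset_compl_iff_disjoint_right, and_comm]]
  simp [missProb, card_compl]

theorem missProb_le_div_pow {N u d a b : ℕ} (hN : 0 < N) (hb : 0 < b)
    (h : b * (N - u) ≤ a * N) : missProb N u d ≤ ((a : ℝ≥0∞) / b) ^ d := by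
  have hratio := Nat.choose_mul_pow_le_choose_mul_pow (Nat.sub_le N u) d
  have hN' : (N : ℝ≥0∞) ^ d ≠ 0 := pow_ne_zero _ (by exact_mod_cast hN.ne')
  have hsub : ((N - u : ℕ) : ℝ≥0∞) ≤ (a / b : ℝ≥0∞) * N := by
    rw [div_eq_mul_inv, mul_right_comm, ← div_eq_mul_inv,
      ENNReal.le_div_iff_mul_le (.inl (by exact_mod_cast hb.ne')) (.inl (ENNReal.natCast_ne_top b))]
    exact_mod_cast mul_comm (N - u) b ▸ h
  refine ENNReal.div_le_of_le_mul ((ENNReal.mul_le_mul_iff_left hN' (by simp)).1 ?_)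
  calc ((N - u).choose d : ℝ≥0∞) * N ^ d ≤ N.choose d * (N - u : ℕ) ^ d := by exact_mod_cast hratio
    _ ≤ N.choose d * ((a / b : ℝ≥0∞) * N) ^ d := by gcongr
    _ = (a / b : ℝ≥0∞) ^ d * N.choose d * N ^ d := by ring

namespace MeasureTheory.Measure

theorem pi_exists_forall_mem_le {ι : Type*} [Fintype ι] {α : ι → Type*}
    [∀ i, MeasurableSpace (α i)] (μ : ∀ i, Measure (α i)) [∀ i, IsProbabilityMeasure (μ i)]
    (𝒲 : Finset (Finset ι)) (B : Finset ι → ∀ i, Set (α i)) {k : ℕ} {q : ℝ≥0∞}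
    (hk : ∀ W ∈ 𝒲, #W = k) (hq : ∀ W ∈ 𝒲, ∀ i ∈ W, μ i (B W i) ≤ q) :
    Measure.pi μ {x | ∃ W ∈ 𝒲, ∀ i ∈ W, x i ∈ B W i} ≤ #𝒲 * q ^ k := by
  have hset : {x | ∃ W ∈ 𝒲, ∀ i ∈ W, x i ∈ B W i} = ⋃ W ∈ 𝒲, (W : Set ι).pi (B W) := by
    ext x; simp
  calc Measure.pi μ {x | ∃ W ∈ 𝒲, ∀ i ∈ W, x i ∈ B W i}
      ≤ ∑ W ∈ 𝒲, Measure.pi μ ((W : Set ι).pi (B W)) := hset ▸ measure_biUnion_finset_le _ _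
    _ ≤ ∑ W ∈ 𝒲, q ^ k := sum_le_sum fun W hW => by
        rw [pi_pi_finset, ← hk W hW]
        exact prod_le_pow_card _ _ _ (hq W hW)
    _ = #𝒲 * q ^ k := by rw [sum_const, nsmul_eq_mul]

theorem prod_apply_le_of_forall_le {α β : Type*} [MeasurableSpace α] [MeasurableSpace β]
    {μ : Measure α} {ν : Measure β} [SFinite μ] [IsProbabilityMeasure ν] {E : Set (α × β)}
    (hE : MeasurableSet E) {c : ℝ≥0∞} (h : ∀ b, μ {a | (a, b) ∈ E} ≤ c) : μ.prod ν E ≤ c := by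
  rw [prod_apply_symm hE]
  calc ∫⁻ b, μ ((·, b) ⁻¹' E) ∂ν ≤ ∫⁻ _, c ∂ν := lintegral_mono h
    _ = c := by simp

theorem pi_setOf_eval_mem_le {ι α : Type*} [Fintype ι] [DecidableEq ι] [MeasurableSpace α]
    [Countable α] [MeasurableSingletonClass α] (μ : Measure α) [IsProbabilityMeasure μ] (i : ι)
    {F : (ι → α) → Set α} (hF : ∀ x y, (∀ j ≠ i, x j = y j) → F x = F y) {c : ℝ≥0∞}
    (hc : ∀ x, μ (F x) ≤ c) :
    Measure.pi (fun _ => μ) {x | x i ∈ F x} ≤ c := by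
  have : Nonempty α := nonempty_of_isProbabilityMeasure μ
  let x₀ : ι → α := fun _ => Classical.arbitrary α
  set E := {x : ι → α | x i ∈ F x}
  have hE : MeasurableSet E := E.to_countable.measurableSet
  have hslice : ∀ x : ι → α,
      (fun y => E.indicator 1 (Function.update x i y)) = (F x).indicator (1 : α → ℝ≥0∞) := by
    intro x
    ext y
    have hmem : Function.update x i y ∈ E ↔ y ∈ F x := by
      change Function.update x i y i ∈ F (Function.update x i y) ↔ _
      rw [Function.update_self, hF _ x fun j hj => Function.update_of_ne hj y x]
    by_cases hy : y ∈ F x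
    · rw [Set.indicator_of_mem (hmem.2 hy), Set.indicator_of_mem hy, Pi.one_apply, Pi.one_apply]
    · rw [Set.indicator_of_notMem (mt hmem.1 hy), Set.indicator_of_notMem hy]
  rw [← lintegral_indicator_one hE, lintegral_eq_lmarginal_univ x₀,
    lmarginal_erase' _ (measurable_one.indicator hE) (mem_univ i)]
  calc _ ≤ (∫⋯∫⁻_(univ.erase i), (fun _ => c) ∂fun _ => μ) x₀ :=
        lmarginal_mono (fun x => ?_) x₀
    _ = c := by simp [lmarginal]
  simp only [hslice, lintegral_indicator_one (F x).to_countable.measurableSet]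
  exact hc x

end MeasureTheory.Measure

theorem measureReal_pi_sum_indicator_le_le_exp {ι β : Type*} [Fintype ι] [MeasurableSpace β]
    (ν : Measure β) [IsProbabilityMeasure ν] {G : Set β} (hG : MeasurableSet G)
    (s : Finset ι) {t : ℝ} (ht : 0 ≤ t) :
    (Measure.pi fun _ : ι => ν).real
        {x | t ≤ ∑ i ∈ s, (ν.real G - G.indicator 1 (x i))} ≤
      Real.exp (-2 * t ^ 2 / #s) := by
  set φ : β → ℝ := fun y => ν.real G - G.indicator 1 y
  have hφ : Measurable φ := measurable_const.sub (measurable_one.indicator hG)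
  have hmean : ∫ y, φ y ∂ν = 0 := by
    rw [integral_sub (integrable_const _) ((integrable_const 1).indicator hG),
      integral_indicator_one hG]
    simp
  have hsub : HasSubgaussianMGF φ ((‖ν.real G - (ν.real G - 1)‖₊ / 2) ^ 2) ν := by
    refine hasSubgaussianMGF_of_mem_Icc_of_integral_eq_zero hφ.aemeasurable
      (ae_of_all _ fun y => ?_) hmean
    by_cases hy : y ∈ G <;> simp [φ, hy]
  rw [sub_sub_cancel, nnnorm_one] at hsub
  have hsub_i : ∀ i ∈ s, HasSubgaussianMGF (fun x : ι → β => φ (x i))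
      ((1 / 2) ^ 2) (Measure.pi fun _ => ν) := fun i _ =>
    HasSubgaussianMGF.of_map (X := φ) (Y := Function.eval i)
      (measurable_pi_apply i).aemeasurable
      (by rwa [(measurePreserving_eval (fun _ => ν) i).map_eq])
  have := HasSubgaussianMGF.measure_sum_ge_le_of_iIndepFun
    (iIndepFun_pi (X := fun _ => φ) fun _ => hφ.aemeasurable) hsub_i ht
  refine this.trans_eq ?_
  rw [Finset.sum_const, nsmul_eq_mul]
  push_cast
  ring_nf

section TrapBounds

variable {α : Type*} [Fintype α] [MeasurableSpace (Finset α)]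
  [MeasurableSingletonClass (Finset α)] {d : ℕ}

theorem isProbabilityMeasure_uniformFinset_powersetCard (hd : d ≤ Fintype.card α) :
    IsProbabilityMeasure (uniformFinset (powersetCard d (univ : Finset α))) :=
  isProbabilityMeasure_uniformFinset (powersetCard_nonempty.2 (by simpa using hd))

variable [DecidableEq α]

theorem pi_peelable_le (hd : d ≤ Fintype.card α) {T : Finset α} (hT : T.Nonempty) :
    Measure.pi (fun _ : α => uniformFinset (powersetCard d univ))
        {S | Peelable S T (#T - #T / 2)} ≤
      4 * missProb (Fintype.card α) (#T / 2) d := by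
  have := isProbabilityMeasure_uniformFinset_powersetCard (α := α) hd
  set q := missProb (Fintype.card α) (#T / 2) d
  set r := #T - #T / 2 with hr_def
  -- `(4q)^r ≤ 4q` once `4q ≤ 1`, and otherwise the bound is trivial.
  rcases le_or_gt 1 (4 * q) with h4q | h4q
  · exact prob_le_one.trans h4q
  have hr : r ≠ 0 := by have := hT.card_pos; omega
  calc Measure.pi _ {S | Peelable S T r}
      ≤ #(T.powersetCard r) * q ^ r := by
        refine Measure.pi_exists_forall_mem_le _ _ (fun W w => {s | Disjoint s (T \ W)})
          (fun W hW => (mem_powersetCard.1 hW).2) fun W hW w _ => ?_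
        obtain ⟨hWT, hWcard⟩ := mem_powersetCard.1 hW
        rw [uniformFinset_powersetCard_disjoint, card_sdiff_of_subset hWT, hWcard,
          show #T - r = #T / 2 by omega]
    _ ≤ 4 ^ r * q ^ r := by
        rw [card_powersetCard]
        gcongr
        calc ((#T).choose r : ℝ≥0∞) ≤ (2 ^ #T : ℕ) := by exact_mod_cast Nat.choose_le_two_pow _ _
          _ ≤ (4 ^ r : ℕ) := by
              exact_mod_cast (Nat.pow_le_pow_right two_pos (by omega : #T ≤ 2 * r)).trans_eq
                (by rw [pow_mul]; norm_num)
          _ = 4 ^ r := by norm_cast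
    _ = (4 * q) ^ r := (mul_pow _ _ _).symm
    _ ≤ 4 * q := pow_le_of_le_one zero_le h4q.le hr

theorem pi_disjoint_core_le (hd : d ≤ Fintype.card α) {T : Finset α} {v : α} (hv : v ∉ T)
    (u : ℕ) :
    Measure.pi (fun _ : α => uniformFinset (powersetCard d univ))
        {S | u ≤ #(core S T) ∧ Disjoint (S v) (core S T)} ≤
      missProb (Fintype.card α) u d := by
  have := isProbabilityMeasure_uniformFinset_powersetCard (α := α) hd
  classical
  let F : (α → Finset α) → Set (Finset α) := fun S =>
    if u ≤ #(core S T) then {s | Disjoint s (core S T)} else ∅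
  have hset : {S : α → Finset α | u ≤ #(core S T) ∧ Disjoint (S v) (core S T)} =
      {S | S v ∈ F S} := by
    ext S
    by_cases h : u ≤ #(core S T) <;> simp [F, h]
  rw [hset]
  refine Measure.pi_setOf_eval_mem_le _ v (fun S S' hSS' => ?_) fun S => ?_
  · simp only [F, core_congr (S := S) (S' := S') fun w hw => hSS' w (ne_of_mem_of_not_mem hw hv)]
  · by_cases h : u ≤ #(core S T)
    · simp only [F, if_pos h]
      rw [uniformFinset_powersetCard_disjoint]
      exact missProb_anti h
    · simp [F, h]

end TrapBounds

namespace RandomParityGame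

instance (i : ℤ) : DecidablePred (ParityFor i) := fun k => by
  unfold ParityFor; infer_instance

instance : IsProbabilityMeasure (uniformFinset ({-1, 1} : Finset ℤ)) :=
  isProbabilityMeasure_uniformFinset ⟨1, by simp⟩

variable {n d : ℕ}

/-- Node `0` is left out so that a trap made of good nodes is independent of the successors
of `0`. -/
def goodNodes (i : ℤ) (ap : (Fin (n + 1) → ℤ) × (Fin (n + 1) → ℕ)) : Finset (Fin (n + 1)) :=
  {w ∈ univ.erase 0 | ap.1 w = i ∧ ParityFor i (ap.2 w)}

abbrev ownerGoodNodes (ω : GameSample (n + 1)) : Finset (Fin (n + 1)) :=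
  goodNodes (ω.2.1 0) ω.2

abbrev ownerTrap (ω : GameSample (n + 1)) : Finset (Fin (n + 1)) :=
  core ω.1 (ownerGoodNodes ω)

theorem winningFrom_of_not_disjoint_ownerTrap (ω : GameSample (n + 1))
    (hne : ∀ w, (ω.1 w).Nonempty) (hmeet : ¬ Disjoint (ω.1 0) (ownerTrap ω)) :
    WinningFrom (sampleE ω) ω.2.1 ω.2.2 (ω.2.1 0) 0 := by
  have hgood : ∀ w ∈ ownerTrap ω, ω.2.1 w = ω.2.1 0 ∧ ParityFor (ω.2.1 0) (ω.2.2 w) :=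
    fun w hw => (mem_filter.1 (core_subset hw)).2
  have hsucc : ∀ w, (ω.1 w ∩ ownerTrap ω).Nonempty → ∃ u ∈ ownerTrap ω, sampleE ω w u :=
    fun w ⟨u, hu⟩ => ⟨u, (mem_inter.1 hu).2, (mem_inter.1 hu).1⟩
  exact winningFrom_of_trap _ rfl (fun w _ => hne w) (fun w hw => (hgood w hw).1)
    (fun w hw => (hgood w hw).2) (fun w hw => hsucc w (succClosed_core w hw))
    (hsucc 0 (not_disjoint_iff_nonempty_inter.1 hmeet))

theorem not_winning_subset :
    {ω : GameSample (n + 1) | ¬ WinningFrom (sampleE ω) ω.2.1 ω.2.2 (ω.2.1 0) 0} ⊆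
      {ω | ∃ w, ω.1 w = ∅} ∪ {ω | ω.2.1 0 ∉ ({-1, 1} : Finset ℤ)} ∪
        {ω | ∃ i ∈ ({-1, 1} : Finset ℤ), #(goodNodes i ω.2) < n / 8} ∪
        {ω | n / 8 ≤ #(ownerGoodNodes ω) ∧
          Peelable ω.1 (ownerGoodNodes ω) (#(ownerGoodNodes ω) - #(ownerGoodNodes ω) / 2)} ∪
        {ω | n / 16 ≤ #(ownerTrap ω) ∧ Disjoint (ω.1 0) (ownerTrap ω)} := by
  intro ω hω
  by_contra h
  simp only [Set.mem_union, Set.mem_ofPred_eq, not_or, not_exists, not_and, not_lt] at h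
  obtain ⟨⟨⟨⟨hne, howner⟩, hlarge⟩, hpeel⟩, hmiss⟩ := h
  set T := ownerGoodNodes ω
  have hT : n / 8 ≤ #T := hlarge _ (not_not.1 howner)
  have hcore : n / 16 ≤ #(ownerTrap ω) := by
    change n / 16 ≤ #(core ω.1 T)
    have := card_lt_card_core_add (hpeel hT)
    have : n / 16 = n / 8 / 2 := by omega
    omega
  exact hω (winningFrom_of_not_disjoint_ownerTrap ω
    (fun w => nonempty_iff_ne_empty.2 (hne w)) (hmiss hcore))

variable (P : Measure ℕ)

theorem gameMeasure_exists_empty (hd : 1 ≤ d) :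
    gameMeasure n d P {ω | ∃ w, ω.1 w = ∅} = 0 := by
  have hnull : ∀ w, Measure.pi (fun _ : Fin n => uniformFinset (powersetCard d univ))
      (Function.eval w ⁻¹' {∅}) = 0 := fun w =>
    Measure.pi_eval_preimage_null _ (uniformFinset_eq_zero
      fun s hs (h : s ∈ ({∅} : Set (Finset (Fin n)))) => by
        rw [Set.mem_singleton_iff.1 h, mem_powersetCard, card_empty] at hs; omega)
  have hset : {ω : GameSample n | ∃ w, ω.1 w = ∅} =
      (⋃ w, Function.eval w ⁻¹' {∅}) ×ˢ Set.univ := by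
    ext ω; simp
  rw [gameMeasure, hset, Measure.prod_prod, measure_iUnion_null hnull, zero_mul]

theorem gameMeasure_owner_not_mem :
    gameMeasure (n + 1) d P {ω | ω.2.1 0 ∉ ({-1, 1} : Finset ℤ)} = 0 := by
  have hset : {ω : GameSample (n + 1) | ω.2.1 0 ∉ ({-1, 1} : Finset ℤ)} =
      Set.univ ×ˢ ((Function.eval (0 : Fin (n + 1)) ⁻¹' {z : ℤ | z ∉ ({-1, 1} : Finset ℤ)}) ×ˢ
        Set.univ) := by
    ext ω; simp
  have hnull : uniformFinset ({-1, 1} : Finset ℤ) {z | z ∉ ({-1, 1} : Finset ℤ)} = 0 :=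
    uniformFinset_eq_zero fun _ hs h => h hs
  rw [gameMeasure, hset, Measure.prod_prod, Measure.prod_prod,
    Measure.pi_eval_preimage_null
      (fun _ : Fin (n + 1) => uniformFinset ({-1, 1} : Finset ℤ)) hnull, zero_mul, mul_zero]

theorem measure_parityFor (hPeven : P {k | Even k} = 1 / 2) (hPodd : P {k | Odd k} = 1 / 2)
    {i : ℤ} : P {k | ParityFor i k} = 1 / 2 := by
  by_cases hi : i = 1 <;> simp [ParityFor, hi, hPeven, hPodd]

abbrev goodPairs (i : ℤ) : Set (ℤ × ℕ) := {i} ×ˢ {k | ParityFor i k}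

theorem card_goodNodes_eq_sum (i : ℤ) (x : Fin (n + 1) → ℤ × ℕ) :
    (#(goodNodes i (MeasurableEquiv.arrowProdEquivProdArrow ℤ ℕ _ x)) : ℝ) =
      ∑ w ∈ univ.erase 0, (goodPairs i).indicator 1 (x w) := by
  rw [goodNodes, card_filter]
  push_cast
  refine sum_congr rfl fun w _ => ?_
  simp [Set.indicator_apply, MeasurableEquiv.arrowProdEquivProdArrow,
    Equiv.arrowProdEquivProdArrow]
  congr

theorem measureReal_goodPairs (hPeven : P {k | Even k} = 1 / 2) (hPodd : P {k | Odd k} = 1 / 2)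
    {i : ℤ} (hi : i ∈ ({-1, 1} : Finset ℤ)) :
    ((uniformFinset ({-1, 1} : Finset ℤ)).prod P).real (goodPairs i) = 1 / 4 := by
  have hi' : uniformFinset ({-1, 1} : Finset ℤ) {i} = 1 / 2 := by
    rw [uniformFinset_apply_eq_card_div (t := {i}) (by simp_all)]
    simp
  simp only [measureReal_def, Measure.prod_prod, hi', measure_parityFor P hPeven hPodd]
  norm_num

variable [IsProbabilityMeasure P]

theorem isProbabilityMeasure_gameMeasure (hd : d ≤ n) :
    IsProbabilityMeasure (gameMeasure n d P) := by
  have := isProbabilityMeasure_uniformFinset_powersetCard (α := Fin n) (by simpa using hd)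
  unfold gameMeasure
  infer_instance

theorem measure_card_goodNodes_lt_le (hPeven : P {k | Even k} = 1 / 2)
    (hPodd : P {k | Odd k} = 1 / 2) {i : ℤ} (hi : i ∈ ({-1, 1} : Finset ℤ)) :
    ((Measure.pi fun _ : Fin (n + 1) => uniformFinset ({-1, 1} : Finset ℤ)).prod
        (Measure.pi fun _ : Fin (n + 1) => P)) {ap | #(goodNodes i ap) < n / 8} ≤
      ENNReal.ofReal (Real.exp (-(n / 32))) := by
  set ν := (uniformFinset ({-1, 1} : Finset ℤ)).prod P
  have hνG : ν.real (goodPairs i) = 1 / 4 := measureReal_goodPairs P hPeven hPodd hi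
  set B := {x : Fin (n + 1) → ℤ × ℕ |
    (n / 8 : ℝ) ≤ ∑ w ∈ univ.erase 0, (ν.real (goodPairs i) - (goodPairs i).indicator 1 (x w))}
  -- Pairing the owner and the priority of each node makes the good nodes i.i.d.
  have hmp := measurePreserving_arrowProdEquivProdArrow ℤ ℕ (Fin (n + 1))
    (fun _ => uniformFinset ({-1, 1} : Finset ℤ)) (fun _ => P)
  rw [← hmp.measure_preimage MeasurableSet.of_discrete.nullMeasurableSet]
  calc _ ≤ Measure.pi (fun _ => ν) B := by
        refine measure_mono fun x (hx : #(goodNodes i _) < n / 8) => ?_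
        have hsmall : (#(goodNodes i (MeasurableEquiv.arrowProdEquivProdArrow ℤ ℕ _ x)) : ℝ) + 1 ≤
            n / 8 := le_trans (by exact_mod_cast hx) Nat.cast_div_le
        simp only [B, Set.mem_ofPred_eq, sum_sub_distrib, sum_const, ← card_goodNodes_eq_sum,
          hνG, card_erase_of_mem (mem_univ _), card_univ,
          Fintype.card_fin, Nat.add_sub_cancel, nsmul_eq_mul]
        linarith
    _ = ENNReal.ofReal ((Measure.pi fun _ => ν).real B) := (ofReal_measureReal).symm
    _ ≤ ENNReal.ofReal (Real.exp (-(n / 32))) := by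
        refine ENNReal.ofReal_le_ofReal ((measureReal_pi_sum_indicator_le_le_exp ν
          MeasurableSet.of_discrete _ (by positivity)).trans_eq ?_)
        rw [card_erase_of_mem (mem_univ _), card_univ, Fintype.card_fin, Nat.add_sub_cancel]
        rcases eq_or_ne (n : ℝ) 0 with hn | hn
        · simp [hn]
        · congr 1
          field_simp
          ring

theorem gameMeasure_card_goodNodes_lt_le (hPeven : P {k | Even k} = 1 / 2)
    (hPodd : P {k | Odd k} = 1 / 2) (hd : d ≤ n + 1) :
    gameMeasure (n + 1) d P {ω | ∃ i ∈ ({-1, 1} : Finset ℤ), #(goodNodes i ω.2) < n / 8} ≤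
      2 * ENNReal.ofReal (Real.exp (-(n / 32))) := by
  have hset : {ω : GameSample (n + 1) | ∃ i ∈ ({-1, 1} : Finset ℤ), #(goodNodes i ω.2) < n / 8} =
      Set.univ ×ˢ ⋃ i ∈ ({-1, 1} : Finset ℤ), {ap | #(goodNodes i ap) < n / 8} := by
    ext ω; simp
  have := isProbabilityMeasure_uniformFinset_powersetCard (α := Fin (n + 1)) (by simpa using hd)
  rw [gameMeasure, hset, Measure.prod_prod, measure_univ, one_mul]
  refine (measure_biUnion_finset_le _ _).trans ?_
  refine (sum_le_card_nsmul _ _ _ fun i hi =>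
    measure_card_goodNodes_lt_le P hPeven hPodd hi).trans ?_
  rw [nsmul_eq_mul]
  gcongr
  norm_num

theorem gameMeasure_peelable_le (hd : d ≤ n + 1) (hn : 8 ≤ n) :
    gameMeasure (n + 1) d P {ω | n / 8 ≤ #(ownerGoodNodes ω) ∧
        Peelable ω.1 (ownerGoodNodes ω) (#(ownerGoodNodes ω) - #(ownerGoodNodes ω) / 2)} ≤
      4 * missProb (n + 1) (n / 16) d := by
  have := isProbabilityMeasure_uniformFinset_powersetCard (α := Fin (n + 1)) (by simpa using hd)
  refine Measure.prod_apply_le_of_forall_le MeasurableSet.of_discrete fun ap => ?_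
  set T := goodNodes (ap.1 0) ap
  by_cases hT : n / 8 ≤ #T
  · calc _ ≤ Measure.pi _ {S | Peelable S T (#T - #T / 2)} := measure_mono fun S hS => hS.2
      _ ≤ 4 * missProb (Fintype.card (Fin (n + 1))) (#T / 2) d :=
          pi_peelable_le (by simpa using hd) (card_pos.1 (by omega))
      _ ≤ 4 * missProb (n + 1) (n / 16) d := by
          rw [Fintype.card_fin]
          gcongr
          exact missProb_anti (by omega)
  · simp [T, hT]

theorem gameMeasure_disjoint_ownerTrap_le (hd : d ≤ n + 1) :
    gameMeasure (n + 1) d P {ω | n / 16 ≤ #(ownerTrap ω) ∧ Disjoint (ω.1 0) (ownerTrap ω)} ≤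
      missProb (n + 1) (n / 16) d := by
  have := isProbabilityMeasure_uniformFinset_powersetCard (α := Fin (n + 1)) (by simpa using hd)
  refine Measure.prod_apply_le_of_forall_le MeasurableSet.of_discrete fun ap => ?_
  simpa using pi_disjoint_core_le (by simpa using hd) (T := goodNodes (ap.1 0) ap)
    (v := 0) (by simp [goodNodes]) (n / 16)

theorem gameMeasure_not_winning_le (hPeven : P {k | Even k} = 1 / 2)
    (hPodd : P {k | Odd k} = 1 / 2) (hd₁ : 1 ≤ d) (hd : d ≤ n + 1) (hn : 31 ≤ n) :
    gameMeasure (n + 1) d P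
        {ω | ¬ WinningFrom (sampleE ω) ω.2.1 ω.2.2 (ω.2.1 0) 0} ≤
      2 * ENNReal.ofReal (Real.exp (-(n / 32))) + 5 * (31 / 32) ^ d := by
  have hq : missProb (n + 1) (n / 16) d ≤ (31 / 32) ^ d := by
    exact_mod_cast missProb_le_div_pow (a := 31) (b := 32) n.succ_pos (by norm_num) (by omega)
  calc _ ≤ 0 + 0 + 2 * ENNReal.ofReal (Real.exp (-(n / 32))) +
        4 * missProb (n + 1) (n / 16) d + missProb (n + 1) (n / 16) d := by
        refine (measure_mono not_winning_subset).trans ?_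
        refine (measure_union_le _ _).trans (add_le_add ?_ (gameMeasure_disjoint_ownerTrap_le P hd))
        refine (measure_union_le _ _).trans
          (add_le_add ?_ (gameMeasure_peelable_le P hd (by omega)))
        refine (measure_union_le _ _).trans
          (add_le_add ?_ (gameMeasure_card_goodNodes_lt_le P hPeven hPodd hd))
        refine (measure_union_le _ _).trans_eq ?_
        rw [gameMeasure_exists_empty P hd₁, gameMeasure_owner_not_mem]
    _ ≤ 2 * ENNReal.ofReal (Real.exp (-(n / 32))) + 5 * (31 / 32) ^ d := by
        rw [zero_add, zero_add, add_assoc, ← add_one_mul]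
        gcongr
        norm_num

theorem tendsto_errorBound {g : ℕ → ℕ} (hg : Tendsto g atTop atTop) :
    Tendsto (fun n : ℕ => 2 * ENNReal.ofReal (Real.exp (-(n / 32))) + 5 * (31 / 32 : ℝ≥0∞) ^ g n)
      atTop (𝓝 0) := by
  have hexp : Tendsto (fun n : ℕ => ENNReal.ofReal (Real.exp (-(n / 32)))) atTop (𝓝 0) := by
    simpa using ENNReal.tendsto_ofReal (Real.tendsto_exp_neg_atTop_nhds_zero.comp
      (tendsto_natCast_atTop_atTop.atTop_div_const (by norm_num : (0 : ℝ) < 32)))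
  have hpow : Tendsto (fun n => (31 / 32 : ℝ≥0∞) ^ g n) atTop (𝓝 0) :=
    (ENNReal.tendsto_pow_atTop_nhds_zero_of_lt_one
      (by rw [ENNReal.div_lt_iff (by norm_num) (by norm_num)]; norm_num)).comp hg
  simpa using (ENNReal.Tendsto.const_mul hexp (.inr (by norm_num))).add
    (ENNReal.Tendsto.const_mul hpow (.inr (by norm_num)))

end RandomParityGame

open RandomParityGame in
/-- **non-sparse games are trivial.** Let `f` satisfy
`1 ≤ f n ≤ n` (for `n ≥ 1`) and `f n → ∞`, and let `P` be a probability
distribution on ℕ giving mass `1/2` to the even numbers and `1/2` to the odd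
numbers. Sample a parity game from `G(n, f n)` (node set `Fin (n+1)`, i.e.
`n ≥ 1` nodes indexed so that the node `v = 0` exists) and fix `v = 0`. Then the
probability that the owner `a v` of `v` has a winning strategy from `v` tends to
`1` as the number of nodes tends to infinity. -/
theorem owner_wins_whp_nonsparse (P : Measure ℕ) [IsProbabilityMeasure P]
    (hPeven : P {k | Even k} = 1 / 2) (hPodd : P {k | Odd k} = 1 / 2)
    (f : ℕ → ℕ) (hf1 : ∀ n : ℕ, 1 ≤ n → 1 ≤ f n) (hf2 : ∀ n : ℕ, 1 ≤ n → f n ≤ n)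
    (hf3 : Filter.Tendsto f Filter.atTop Filter.atTop) :
    Filter.Tendsto
      (fun n : ℕ => gameMeasure (n + 1) (f (n + 1)) P
        {ω : GameSample (n + 1) |
          WinningFrom (sampleE ω) ω.2.1 ω.2.2 (ω.2.1 0) 0})
      Filter.atTop (nhds 1) := by
  have hd : ∀ n, f (n + 1) ≤ n + 1 := fun n => hf2 _ n.succ_pos
  have herr := tendsto_errorBound (hf3.comp (tendsto_add_atTop_nat 1))
  refine tendsto_of_tendsto_of_tendsto_of_le_of_le'
    (by simpa using ENNReal.Tendsto.sub tendsto_const_nhds herr (.inl ENNReal.one_ne_top))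
    tendsto_const_nhds ?_ (Eventually.of_forall fun n => ?_)
  · filter_upwards [eventually_ge_atTop 31] with n hn
    have := isProbabilityMeasure_gameMeasure P (hd n)
    rw [← compl_compl {ω : GameSample (n + 1) | _}, prob_compl_eq_one_sub MeasurableSet.of_discrete,
      Set.compl_ofPred]
    exact tsub_le_tsub_left
      (gameMeasure_not_winning_le P hPeven hPodd (hf1 _ n.succ_pos) (hd n) hn) 1
  · have := isProbabilityMeasure_gameMeasure P (hd n)
    exact prob_le_one
end

section
/- Let a finite parity game, a node v, and a natural number h ≥ 1 be such that every directed path v = v₀ → v₁ → ⋯ → v_h of length h starting at v contains an index j ∈ {1,…,h} with ℓ(v_j) ≠ 0. Then for each player i ∈ {-1,+1}: player i has a winning strategy from v in the parity game if and only if player i has a strategy such that along every play from v consistent with it, the first node w encountered with ℓ(w) ≠ 0 satisfies ℓ(w) = i (such a node is encountered within the first h steps of every play). -/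
/-- A cycle `w 0, w 1, …, w k` (with `k ≥ 1`, `w k = w 0`, following edges) is
self-winning for player `i` if all its nodes are owned by `i` and the maximal
priority on it is odd when `i = +1` and even when `i = -1`. The node `v` is
required to lie on the cycle. -/
def OnSelfWinningCycle {V : Type*} (E : V → V → Prop) (a : V → ℤ) (p : V → ℕ)
    (i : ℤ) (v : V) : Prop :=
  ∃ (k : ℕ) (w : ℕ → V), 1 ≤ k ∧ w k = w 0 ∧
    (∀ j < k, E (w j) (w (j + 1))) ∧
    (∃ j < k, w j = v) ∧
    (∀ j < k, a (w j) = i) ∧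
    (if i = 1 then Odd ((Finset.range k).sup fun j => p (w j))
     else Even ((Finset.range k).sup fun j => p (w j)))

/-- A node is self-winning if it lies on a cycle that is self-winning for its
owner. -/
def SelfWinningNode {V : Type*} (E : V → V → Prop) (a : V → ℤ) (p : V → ℕ)
    (v : V) : Prop :=
  OnSelfWinningCycle E a p (a v) v

/-- `ℓ(v) = a(v)`: there exists a directed path from `v` to a self-winning node
all of whose nodes (including `v` and the endpoint) are owned by `a v`. If this
fails, `ℓ(v) = 0`. -/
def EllReaches {V : Type*} (E : V → V → Prop) (a : V → ℤ) (p : V → ℕ)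
    (v : V) : Prop :=
  ∃ (m : ℕ) (w : ℕ → V), w 0 = v ∧
    (∀ j < m, E (w j) (w (j + 1))) ∧
    (∀ j ≤ m, a (w j) = a v) ∧
    SelfWinningNode E a p (w m)

open Filter

lemma natLimsup_eq {u : ℕ → ℕ} {M : ℕ} (hub : ∀ᶠ n in atTop, u n ≤ M)
    (hfr : ∀ N, ∃ n, N ≤ n ∧ u n = M) : atTop.limsup u = M := by
  rw [Filter.limsup_eq]
  apply le_antisymm
  · exact csInf_le (OrderBot.bddBelow _) hub
  · apply le_csInf ⟨M, hub⟩
    intro b hb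
    rw [Set.mem_setOf_eq, Filter.eventually_atTop] at hb
    obtain ⟨N, hN⟩ := hb
    obtain ⟨n, hn, hun⟩ := hfr N
    exact hun ▸ hN n hn

def buildPlay {V : Type*} (step : List V → V) (v : V) : ℕ → V
  | 0 => v
  | n + 1 => step (List.ofFn fun j : Fin (n + 1) => buildPlay step v j.val)
termination_by n => n
decreasing_by exact j.isLt

lemma ofFn_succ_eq {V : Type*} (f : ℕ → V) (n : ℕ) :
    List.ofFn (fun j : Fin (n+1) => f j) = (List.ofFn fun j : Fin n => f j) ++ [f n] := by
  rw [List.ofFn_succ']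
  simp [List.concat_eq_append]

lemma getD_ofFn {V : Type*} (f : ℕ → V) (n r : ℕ) (hr : r < n) (d : V) :
    (List.ofFn fun j : Fin n => f j).getD r d = f r := by
  rw [List.getD_eq_getElem _ _ (by simpa using hr)]
  simp

lemma dropLast_ofFn {V : Type*} (f : ℕ → V) (n : ℕ) :
    (List.ofFn fun j : Fin (n+1) => f j).dropLast = List.ofFn fun j : Fin n => f j := by
  rw [ofFn_succ_eq]
  simp

lemma getD_hist {V : Type*} (F : ℕ → V) (s r : ℕ) (hr : r ≤ s) :
    ((List.ofFn fun j : Fin s => F j) ++ [F s]).getD r (F s) = F r := by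
  rw [← ofFn_succ_eq F s]
  exact getD_ofFn F (s+1) r (by omega) _

lemma ellReaches_play {V : Type*} (E : V → V → Prop) (a : V → ℤ) (p : V → ℕ)
    {u : V} (hu : EllReaches E a p u) :
    ∃ gM : (ℕ → V) × ℕ, gM.1 0 = u ∧ (∀ t, E (gM.1 t) (gM.1 (t+1))) ∧
      (∀ t, a (gM.1 t) = a u) ∧
      (∃ N, ∀ t, N ≤ t → p (gM.1 t) ≤ gM.2) ∧
      (∀ N, ∃ t, N ≤ t ∧ p (gM.1 t) = gM.2) ∧
      (if a u = 1 then Odd gM.2 else Even gM.2) := by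
  obtain ⟨m, w, hw0, hwE, hwa, hsw⟩ := hu
  obtain ⟨k, c, hk, hck, hcE, ⟨j0, hj0, hcj0⟩, hca, hpar⟩ := hsw
  have hkpos : 0 < k := hk
  set M : ℕ := (Finset.range k).sup fun j => p (c j) with hM
  set g : ℕ → V := fun s => if s < m then w s else c ((s - m + j0) % k) with hg
  have hgcyc : ∀ s, m ≤ s → g s = c ((s - m + j0) % k) := by
    intro s hs; simp [hg, Nat.not_lt.mpr hs]
  have hgpath : ∀ s, s < m → g s = w s := by
    intro s hs; simp [hg, hs]
  have hgm : g m = w m := by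
    rw [hgcyc m le_rfl]
    simp [Nat.mod_eq_of_lt hj0, hcj0]
  have hcyc : ∀ r, r < k → E (c r) (c ((r+1) % k)) := by
    intro r hr
    rcases eq_or_lt_of_le (Nat.succ_le_of_lt hr) with heq | hlt
    · have h0 : (r+1) % k = 0 := by
        rw [← heq]; exact Nat.mod_self _
      rw [h0, ← hck, ← heq]
      exact hcE r hr
    · rw [Nat.mod_eq_of_lt hlt]
      exact hcE r hr
  have hmod1 : ∀ x : ℕ, (x + 1) % k = (x % k + 1) % k := by
    intro x
    conv_rhs => rw [Nat.add_mod, Nat.mod_mod_of_dvd _ dvd_rfl, ← Nat.add_mod]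
  have p1 : g 0 = u := by
    by_cases hm : 0 < m
    · rw [hgpath 0 hm, hw0]
    · have hm0 : m = 0 := by omega
      rw [show (0:ℕ) = m from hm0.symm, hgm, hm0, hw0]
  have p2 : ∀ t, E (g t) (g (t+1)) := by
    intro s
    by_cases h1 : s + 1 < m
    · have h2 : s < m := by omega
      rw [hgpath s h2, hgpath (s+1) h1]
      exact hwE s h2
    · by_cases h2 : s < m
      · have h3 : s + 1 = m := by omega
        rw [hgpath s h2, show g (s+1) = w m from by rw [h3, hgm], ← h3]
        exact hwE s h2
      · have hs : m ≤ s := by omega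
        rw [hgcyc s hs, hgcyc (s+1) (by omega)]
        have he : s + 1 - m + j0 = (s - m + j0) + 1 := by omega
        rw [he, hmod1]
        exact hcyc _ (Nat.mod_lt _ hkpos)
  have p3 : ∀ t, a (g t) = a u := by
    intro t
    by_cases h1 : t < m
    · rw [hgpath t h1]
      exact hwa t (by omega)
    · rw [hgcyc t (by omega), hca _ (Nat.mod_lt _ hkpos)]
      exact hwa m le_rfl
  have p4 : ∃ N, ∀ t, N ≤ t → p (g t) ≤ M := by
    refine ⟨m, fun t ht => ?_⟩
    rw [hgcyc t ht, hM]
    exact Finset.le_sup (f := fun j => p (c j)) (Finset.mem_range.mpr (Nat.mod_lt _ hkpos))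
  have p5 : ∀ N, ∃ t, N ≤ t ∧ p (g t) = M := by
    obtain ⟨js, hjs, hjsv⟩ := Finset.exists_mem_eq_sup (Finset.range k)
      ⟨0, Finset.mem_range.mpr hkpos⟩ (fun j => p (c j))
    rw [Finset.mem_range] at hjs
    intro N
    refine ⟨m + N * k + (js + k - j0) % k, ?_, ?_⟩
    · have : N ≤ N * k := by
        calc N = N * 1 := by ring
        _ ≤ N * k := Nat.mul_le_mul_left N hk
      omega
    · rw [hgcyc _ (by omega)]
      have harg : m + N * k + (js + k - j0) % k - m + j0
          = ((js + k - j0) % k + j0) + N * k := by omega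
      rw [harg, Nat.add_mul_mod_self_right, Nat.mod_add_mod,
        show js + k - j0 + j0 = js + k from by omega,
        Nat.add_mod_right, Nat.mod_eq_of_lt hjs]
      exact hjsv.symm
  have p6 : if a u = 1 then Odd M else Even M := by
    rw [← hwa m le_rfl]
    exact hpar
  exact ⟨(g, M), p1, p2, p3, p4, p5, p6⟩

open Classical in
noncomputable def ellData {V : Type*} (E : V → V → Prop) (a : V → ℤ) (p : V → ℕ)
    (u : V) : (ℕ → V) × ℕ :=
  if h : EllReaches E a p u then (ellReaches_play E a p h).choose else (fun _ => u, 0)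

lemma ellData_spec {V : Type*} (E : V → V → Prop) (a : V → ℤ) (p : V → ℕ)
    {u : V} (h : EllReaches E a p u) :
    (ellData E a p u).1 0 = u ∧
      (∀ t, E ((ellData E a p u).1 t) ((ellData E a p u).1 (t+1))) ∧
      (∀ t, a ((ellData E a p u).1 t) = a u) ∧
      (∃ N, ∀ t, N ≤ t → p ((ellData E a p u).1 t) ≤ (ellData E a p u).2) ∧
      (∀ N, ∃ t, N ≤ t ∧ p ((ellData E a p u).1 t) = (ellData E a p u).2) ∧
      (if a u = 1 then Odd (ellData E a p u).2 else Even (ellData E a p u).2) := by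
  have : ellData E a p u = (ellReaches_play E a p h).choose := by
    rw [ellData, dif_pos h]
  rw [this]
  exact (ellReaches_play E a p h).choose_spec

lemma playLimsup_of_tail {V : Type*} (p : V → ℕ) (f g : ℕ → V) (M t N : ℕ)
    (hbd : ∀ s, N ≤ s → p (g s) ≤ M) (hfr : ∀ K, ∃ s, K ≤ s ∧ p (g s) = M)
    (htail : ∀ s, t ≤ s → f s = g (s - t)) : playLimsup p f = M := by
  unfold playLimsup
  apply natLimsup_eq
  · filter_upwards [eventually_ge_atTop (t + N)] with s hs
    rw [htail s (by omega)]
    exact hbd _ (by omega)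
  · intro K
    obtain ⟨n, hn, hpn⟩ := hfr K
    refine ⟨n + t, by omega, ?_⟩
    rw [htail (n+t) (by omega), Nat.add_sub_cancel]
    exact hpn

lemma extend_play {V : Type*} (E : V → V → Prop) (a : V → ℤ) (i : ℤ)
    (σ : List V → V → V) (hσ : IsStrategy E a i σ) (hE : ∀ v, ∃ w, E v w)
    (v : V) (f : ℕ → V) (t : ℕ) (hf : IsPlay E v f)
    (hcons : ∀ s, s < t → a (f s) = i → f (s+1) = σ (List.ofFn fun j : Fin s => f j) (f s)) :
    ∃ f', IsPlay E v f' ∧ ConsistentPlay a i σ f' ∧ ∀ s, s ≤ t → f' s = f s := by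
  classical
  set step : List V → V := fun L =>
    if L.length ≤ t then f L.length
    else if a (L.getD (L.length - 1) v) = i then σ L.dropLast (L.getD (L.length - 1) v)
    else (hE (L.getD (L.length - 1) v)).choose with hstep
  set f' : ℕ → V := buildPlay step v with hf'
  have f'0 : f' 0 = v := by rw [hf', buildPlay]
  have f'succ : ∀ n, f' (n+1) = step (List.ofFn fun j : Fin (n+1) => f' j) := by
    intro n; rw [hf', buildPlay]
  have hlen : ∀ n, (List.ofFn fun j : Fin (n+1) => f' j).length = n + 1 := by
    intro n; simp
  have hgetD : ∀ n : ℕ, (List.ofFn fun j : Fin (n+1) => f' j).getD (n + 1 - 1) v = f' n := by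
    intro n; exact getD_ofFn f' (n+1) n (by omega) v
  have heq : ∀ s, s ≤ t → f' s = f s := by
    intro s hs
    cases s with
    | zero => rw [f'0, hf.1]
    | succ n =>
      rw [f'succ n, hstep]
      simp only [hlen]
      rw [if_pos hs]
  constructor
  constructor
  · -- IsPlay
    refine ⟨f'0, fun n => ?_⟩
    rw [f'succ n, hstep]
    simp only [hlen]
    by_cases h1 : n + 1 ≤ t
    · rw [if_pos h1, heq n (by omega)]
      exact hf.2 n
    · rw [if_neg h1]
      simp only [hgetD n]
      by_cases h2 : a (f' n) = i
      · rw [if_pos h2]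
        exact hσ _ _ h2
      · rw [if_neg h2]
        exact (hE (f' n)).choose_spec
  · constructor
    · -- ConsistentPlay
      intro n han
      rw [f'succ n, hstep]
      simp only [hlen]
      by_cases h1 : n + 1 ≤ t
      · rw [if_pos h1]
        have hhist : (List.ofFn fun j : Fin n => f j) = List.ofFn fun j : Fin n => f' j := by
          exact congrArg List.ofFn (funext fun j => (heq j (by omega)).symm)
        rw [hcons n (by omega) (by rw [← heq n (by omega)]; exact han), hhist,
          heq n (by omega)]
      · rw [if_neg h1]
        simp only [hgetD n]
        rw [if_pos han, dropLast_ofFn]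
    · exact heq

/-- **correctness of backward induction at height `h`.**
Suppose every directed path `v = v₀ → v₁ → ⋯ → v_h` of length `h` from `v`
contains an index `j ∈ {1,…,h}` with `ℓ(v_j) ≠ 0` (i.e. `EllReaches` holds at
`v_j`). Then for each player `i ∈ {-1,+1}`: player `i` has a winning strategy
from `v` if and only if player `i` has a strategy such that along every play
from `v` consistent with it, the first node `w` encountered with `ℓ(w) ≠ 0`
satisfies `ℓ(w) = i` (i.e. `EllReaches` holds at `w` and `a w = i`), such a node
being encountered within the first `h` steps. -/
theorem backward_induction_correct {V : Type*} [Fintype V] [Nonempty V]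
    (E : V → V → Prop) (a : V → ℤ) (p : V → ℕ)
    (hE : ∀ v, ∃ w, E v w) (ha : ∀ v, a v = 1 ∨ a v = -1)
    (v : V) (h : ℕ) (hh : 1 ≤ h)
    (hpath : ∀ w : ℕ → V, w 0 = v → (∀ j < h, E (w j) (w (j + 1))) →
      ∃ j, 1 ≤ j ∧ j ≤ h ∧ EllReaches E a p (w j))
    (i : ℤ) (hi : i = 1 ∨ i = -1) :
    WinningFrom E a p i v ↔
      ∃ σ : List V → V → V, IsStrategy E a i σ ∧
        ∀ f : ℕ → V, IsPlay E v f → ConsistentPlay a i σ f →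
          ∃ t, t ≤ h ∧ EllReaches E a p (f t) ∧
            (∀ s < t, ¬ EllReaches E a p (f s)) ∧ a (f t) = i := by
  classical
  constructor
  · rintro ⟨σ, hσ, hwin⟩
    refine ⟨σ, hσ, ?_⟩
    intro f hplay hcons
    obtain ⟨j, hj1, hjh, hEllj⟩ := hpath f hplay.1 (fun r _ => hplay.2 r)
    have hex : ∃ s, EllReaches E a p (f s) := ⟨j, hEllj⟩
    refine ⟨Nat.find hex, le_trans (Nat.find_le hEllj) hjh, Nat.find_spec hex,
      fun s hs => Nat.find_min hex hs, ?_⟩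
    set t := Nat.find hex with htdef
    have htEll : EllReaches E a p (f t) := Nat.find_spec hex
    by_contra hne
    obtain ⟨⟨g, M⟩, hg0, hgE, hga, ⟨N, hbd⟩, hfr, hpar⟩ := ellReaches_play E a p htEll
    dsimp only at hg0 hgE hga hbd hfr hpar
    set f2 : ℕ → V := fun s => if s < t then f s else g (s - t) with hf2
    have hf2tail : ∀ s, t ≤ s → f2 s = g (s - t) := fun s hs => by
      simp [hf2, Nat.not_lt.mpr hs]
    have hf2eq : ∀ s, s ≤ t → f2 s = f s := by
      intro s hs
      rcases lt_or_eq_of_le hs with hlt | heq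
      · simp [hf2, hlt]
      · rw [heq, hf2tail t le_rfl, Nat.sub_self, hg0]
    have hplay2 : IsPlay E v f2 := by
      refine ⟨by rw [hf2eq 0 (by omega), hplay.1], fun s => ?_⟩
      by_cases h1 : s < t
      · rw [hf2eq s (by omega), hf2eq (s+1) (by omega)]
        exact hplay.2 s
      · rw [hf2tail s (by omega), hf2tail (s+1) (by omega),
          show s + 1 - t = (s - t) + 1 from by omega]
        exact hgE _
    have hcons2 : ConsistentPlay a i σ f2 := by
      intro s has
      by_cases h1 : s < t
      · have hhist : (List.ofFn fun j : Fin s => f2 j) = List.ofFn fun j : Fin s => f j :=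
          congrArg List.ofFn (funext fun j => hf2eq j (by omega))
        rw [hf2eq (s+1) (by omega), hhist, hf2eq s (by omega)]
        exact hcons s (by rw [← hf2eq s (by omega)]; exact has)
      · exfalso
        rw [hf2tail s (by omega), hga] at has
        exact hne has
    have hw2 := hwin f2 hplay2 hcons2
    have hlim : playLimsup p f2 = M := playLimsup_of_tail p f2 g M t N hbd hfr hf2tail
    rcases hi with hi1 | hi1 <;> rcases ha (f t) with hat | hat
    · exact hne (by rw [hat, hi1])
    · have hOdd : Odd M := by
        unfold WinsPlay at hw2
        rw [if_pos hi1, hlim] at hw2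
        exact hw2
      have hEven : Even M := by
        rw [hat] at hpar
        simpa using hpar
      exact (Nat.not_odd_iff_even.mpr hEven) hOdd
    · have hEven : Even M := by
        unfold WinsPlay at hw2
        rw [if_neg (by rw [hi1]; decide), hlim] at hw2
        exact hw2
      have hOdd : Odd M := by
        rw [hat] at hpar
        simpa using hpar
      exact (Nat.not_odd_iff_even.mpr hEven) hOdd
    · exact hne (by rw [hat, hi1])
  · rintro ⟨σ, hσ, hfirst⟩
    refine ⟨fun hist x =>
      if ht : ∃ r, r < (hist ++ [x]).length ∧ EllReaches E a p ((hist ++ [x]).getD r x) then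
        if a ((hist ++ [x]).getD (Nat.find ht) x) = i ∧
            x = (ellData E a p ((hist ++ [x]).getD (Nat.find ht) x)).1
              ((hist ++ [x]).length - 1 - Nat.find ht)
        then (ellData E a p ((hist ++ [x]).getD (Nat.find ht) x)).1
              ((hist ++ [x]).length - Nat.find ht)
        else σ hist x
      else σ hist x, ?_, ?_⟩
    · -- IsStrategy
      intro hist x hax
      dsimp only
      split_ifs with h1 h2
      · obtain ⟨hsp1, hsp2⟩ := Nat.find_spec h1
        obtain ⟨_, hgE', _, _, _, _⟩ := ellData_spec E a p hsp2
        have harith : (hist ++ [x]).length - Nat.find h1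
            = ((hist ++ [x]).length - 1 - Nat.find h1) + 1 := by
          have := hsp1; omega
        have hedge := hgE' ((hist ++ [x]).length - 1 - Nat.find h1)
        rw [← h2.2] at hedge
        rw [harith]
        exact hedge
      · exact hσ hist x hax
      · exact hσ hist x hax
    · -- winning
      intro f hplay hcons
      obtain ⟨j, hj1, hjh, hEllj⟩ := hpath f hplay.1 (fun r _ => hplay.2 r)
      have hex : ∃ s, EllReaches E a p (f s) := ⟨j, hEllj⟩
      set t := Nat.find hex with htdef
      have htEll : EllReaches E a p (f t) := Nat.find_spec hex
      have hmin : ∀ s, s < t → ¬ EllReaches E a p (f s) := fun s hs => Nat.find_min hex hs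
      have hth : t ≤ h := le_trans (Nat.find_le hEllj) hjh
      -- pre-t consistency with σ
      have hpre : ∀ s, s < t → a (f s) = i →
          f (s+1) = σ (List.ofFn fun j : Fin s => f j) (f s) := by
        intro s hst has
        rw [hcons s has]
        dsimp only
        rw [dif_neg]
        rintro ⟨r, hr, hEllr⟩
        have hrs : r ≤ s := by
          simp only [List.length_append, List.length_ofFn, List.length_cons,
            List.length_nil] at hr
          omega
        rw [getD_hist f s r hrs] at hEllr
        exact hmin r (by omega) hEllr
      obtain ⟨f2, hplay2, hcons2, hagree⟩ := extend_play E a i σ hσ hE v f t hplay hpre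
      obtain ⟨t', ht'h, hEll', hmin', ha'⟩ := hfirst f2 hplay2 hcons2
      have htt : t' = t := by
        rcases lt_trichotomy t' t with hc | hc | hc
        · exact absurd ((hagree t' (by omega)) ▸ hEll') (hmin t' hc)
        · exact hc
        · exact absurd ((hagree t le_rfl).symm ▸ htEll) (hmin' t hc)
      have hat : a (f t) = i := by
        rw [← hagree t le_rfl, ← htt]
        exact ha'
      obtain ⟨hg0, hgE', hga, ⟨N, hbd⟩, hfr, hpar⟩ := ellData_spec E a p htEll
      -- the play follows the canonical winning continuation from time t on
      have hind : ∀ s, t ≤ s → f s = (ellData E a p (f t)).1 (s - t) := by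
        intro s hs
        induction s, hs using Nat.le_induction with
        | base => rw [Nat.sub_self, hg0]
        | succ s hs ih =>
          have has : a (f s) = i := by rw [ih, hga, hat]
          rw [hcons s has]
          dsimp only
          have hex2 : ∃ r, r < ((List.ofFn fun j : Fin s => f j) ++ [f s]).length ∧
              EllReaches E a p (((List.ofFn fun j : Fin s => f j) ++ [f s]).getD r (f s)) := by
            refine ⟨t, ?_, ?_⟩
            · simp only [List.length_append, List.length_ofFn, List.length_cons,
                List.length_nil]
              omega
            · rw [getD_hist f s t hs]
              exact htEll
          rw [dif_pos hex2]
          have hfind : Nat.find hex2 = t := by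
            apply le_antisymm
            · exact Nat.find_le ⟨by
                simp only [List.length_append, List.length_ofFn, List.length_cons,
                  List.length_nil]
                omega, by rw [getD_hist f s t hs]; exact htEll⟩
            · by_contra hlt
              push_neg at hlt
              have hsp := Nat.find_spec hex2
              have hle : Nat.find hex2 ≤ s := by omega
              rw [getD_hist f s _ hle] at hsp
              exact hmin _ hlt hsp.2
          have hgd : ((List.ofFn fun j : Fin s => f j) ++ [f s]).getD (Nat.find hex2) (f s)
              = f t := by
            rw [hfind]; exact getD_hist f s t hs
          have hlenL : ((List.ofFn fun j : Fin s => f j) ++ [f s]).length = s + 1 := by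
            simp
          rw [if_pos ⟨by rw [hgd]; exact hat,
            by rw [hgd, hfind, hlenL, show s + 1 - 1 - t = s - t from by omega]; exact ih⟩]
          rw [hgd, hfind, hlenL, show s + 1 - t = (s - t) + 1 from by omega]
      have hlim : playLimsup p f = (ellData E a p (f t)).2 :=
        playLimsup_of_tail p f _ _ t N hbd hfr hind
      unfold WinsPlay
      rcases hi with hi1 | hi1
      · rw [if_pos hi1, hlim]
        rw [hat, hi1] at hpar
        simpa using hpar
      · rw [if_neg (by rw [hi1]; decide), hlim]
        rw [hat, hi1] at hpar
        simpa using hpar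
end

section
/- Let d ≥ 2, n ≥ 1, k ≥ 1 be natural numbers and let t be a natural number with t ≥ 2k and ln(t/k) ≤ n·ln d. Then ∏_{s=⌈t/2⌉}^{t} ( 1 - ln(s/k)/(n·ln d) )^d ≤ exp( - d·t·ln(t/(2k)) / (2·n·ln d) ). -/
open Finset

/-- For natural numbers `d ≥ 2`, `n ≥ 1`, `k ≥ 1` and `t` with
`t ≥ 2k` and `ln(t/k) ≤ n·ln d`,
`∏_{s=⌈t/2⌉}^{t} (1 - ln(s/k)/(n·ln d))^d ≤ exp(-d·t·ln(t/(2k))/(2·n·ln d))`.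
(Here `⌈t/2⌉ = (t+1)/2` in ℕ, and all logarithms are natural logarithms.) -/
theorem no_cycle_probability_bound (d n k t : ℕ)
    (hd : 2 ≤ d) (hn : 1 ≤ n) (hk : 1 ≤ k) (ht : 2 * k ≤ t)
    (hlog : Real.log ((t : ℝ) / (k : ℝ)) ≤ (n : ℝ) * Real.log d) :
    ∏ s ∈ Finset.Icc ((t + 1) / 2) t,
        (1 - Real.log ((s : ℝ) / (k : ℝ)) / ((n : ℝ) * Real.log d)) ^ d
      ≤ Real.exp (-((d : ℝ) * (t : ℝ) * Real.log ((t : ℝ) / (2 * (k : ℝ))) /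
          (2 * (n : ℝ) * Real.log d))) := by
  have hd1 : (1:ℝ) < (d:ℝ) := by exact_mod_cast lt_of_lt_of_le one_lt_two hd
  have hlogd : 0 < Real.log d := Real.log_pos hd1
  have hn1 : (1:ℝ) ≤ (n:ℝ) := by exact_mod_cast hn
  have hA : 0 < (n:ℝ) * Real.log d := mul_pos (by linarith) hlogd
  have hk0 : (0:ℝ) < (k:ℝ) := by exact_mod_cast hk
  have ht0 : (0:ℝ) < (t:ℝ) := by exact_mod_cast (by omega : 0 < t)
  set A := (n:ℝ) * Real.log d with hAdef
  set L := Real.log ((t:ℝ) / (2 * (k:ℝ))) with hLdef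
  have htk : 2 * (k:ℝ) ≤ (t:ℝ) := by exact_mod_cast ht
  have hL0 : 0 ≤ L := Real.log_nonneg (by rw [le_div_iff₀ (by positivity)]; linarith)
  have key : ∀ s ∈ Finset.Icc ((t + 1) / 2) t,
      (1 - Real.log ((s : ℝ) / (k : ℝ)) / A) ^ d ≤ Real.exp (-((d:ℝ) * L / A)) := by
    intro s hs
    simp only [Finset.mem_Icc] at hs
    have hsk : k ≤ s := by omega
    have hskR : (k:ℝ) ≤ (s:ℝ) := by exact_mod_cast hsk
    have hs0 : (0:ℝ) < (s:ℝ) := lt_of_lt_of_le hk0 hskR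
    have hstR : (s:ℝ) ≤ (t:ℝ) := by exact_mod_cast hs.2
    have h2s : (t:ℝ) ≤ 2 * (s:ℝ) := by exact_mod_cast (by omega : t ≤ 2 * s)
    set x := Real.log ((s:ℝ) / (k:ℝ)) with hxdef
    have hx0 : 0 ≤ x := Real.log_nonneg ((one_le_div hk0).2 hskR)
    have hxle : x ≤ Real.log ((t:ℝ) / (k:ℝ)) := by
      apply Real.log_le_log (by positivity)
      gcongr
    have hx1 : x / A ≤ 1 := (div_le_one hA).2 (hxle.trans hlog)
    have hLx : L ≤ x := by
      apply Real.log_le_log (by positivity)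
      rw [div_le_div_iff₀ (by positivity) hk0]
      nlinarith
    have h1 : 1 - x / A ≤ Real.exp (-(x / A)) := by
      have := Real.add_one_le_exp (-(x / A))
      linarith
    have h2 : (1 - x / A) ^ d ≤ (Real.exp (-(x / A))) ^ d :=
      pow_le_pow_left₀ (by linarith) h1 d
    refine h2.trans ?_
    rw [← Real.exp_nat_mul]
    apply Real.exp_le_exp.2
    have hmono : (d:ℝ) * L / A ≤ (d:ℝ) * x / A := by
      gcongr
    calc (d:ℝ) * -(x / A) = -((d:ℝ) * x / A) := by ring
      _ ≤ -((d:ℝ) * L / A) := by linarith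
  have hnonneg : ∀ s ∈ Finset.Icc ((t + 1) / 2) t,
      0 ≤ (1 - Real.log ((s : ℝ) / (k : ℝ)) / A) := by
    intro s hs
    simp only [Finset.mem_Icc] at hs
    have hsk : k ≤ s := by omega
    have hskR : (k:ℝ) ≤ (s:ℝ) := by exact_mod_cast hsk
    have hs0 : (0:ℝ) < (s:ℝ) := lt_of_lt_of_le hk0 hskR
    have hstR : (s:ℝ) ≤ (t:ℝ) := by exact_mod_cast hs.2
    have hxle : Real.log ((s:ℝ)/(k:ℝ)) ≤ Real.log ((t:ℝ) / (k:ℝ)) := by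
      apply Real.log_le_log (by positivity)
      gcongr
    have := (div_le_one hA).2 (hxle.trans hlog)
    linarith
  calc ∏ s ∈ Finset.Icc ((t + 1) / 2) t,
        (1 - Real.log ((s : ℝ) / (k : ℝ)) / A) ^ d
      ≤ ∏ s ∈ Finset.Icc ((t + 1) / 2) t, Real.exp (-((d:ℝ) * L / A)) := by
        apply Finset.prod_le_prod
        · intro s hs; exact pow_nonneg (hnonneg s hs) d
        · exact key
    _ = Real.exp (-((d:ℝ) * L / A)) ^ (Finset.Icc ((t + 1) / 2) t).card :=
        Finset.prod_const _
    _ ≤ Real.exp (-((d : ℝ) * (t : ℝ) * L / (2 * A))) := by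
        rw [← Real.exp_nat_mul]
        apply Real.exp_le_exp.2
        have hcard : ((Finset.Icc ((t + 1) / 2) t).card : ℝ) ≥ (t:ℝ) / 2 := by
          rw [Nat.card_Icc]
          have h1 : t ≤ 2 * (t + 1 - (t + 1) / 2) := by omega
          have h2 : (t:ℝ) ≤ 2 * ((t + 1 - (t + 1) / 2 : ℕ) : ℝ) := by exact_mod_cast h1
          linarith
        have hdLA : 0 ≤ (d:ℝ) * L / A := by positivity
        have h := mul_le_mul_of_nonneg_right hcard hdLA
        have heq : (d : ℝ) * (t : ℝ) * L / (2 * A) = (t:ℝ) / 2 * ((d:ℝ) * L / A) := by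
          field_simp
        rw [heq]
        nlinarith
    _ = Real.exp (-((d : ℝ) * (t : ℝ) * L / (2 * ((n:ℝ) * Real.log d)))) := by
        rw [hAdef]
    _ = Real.exp (-((d : ℝ) * (t : ℝ) * L / (2 * (n:ℝ) * Real.log d))) := by
        ring_nf
end

section
/- d·η(d-1, 1/4) → 0 as d → ∞, where η(d-1, 1/4) is the smallest x ∈ [0,1] with (3/4 + x/4)^{d-1} = x. In particular, there exists a natural number d_P such that d·η(d-1, 1/4) < 1 for all natural numbers d ≥ d_P. -/
/-- `eta d q` is the extinction probability of a branching process with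
offspring distribution Binomial`(d, q)`: the smallest `x ∈ [0,1]` satisfying
`(1 - q + q·x)^d = x`. -/
noncomputable def eta (d : ℕ) (q : ℝ) : ℝ :=
  sInf {x : ℝ | x ∈ Set.Icc (0 : ℝ) 1 ∧ (1 - q + q * x) ^ d = x}

lemma eta_set_nonempty (d : ℕ) :
    Set.Nonempty {x : ℝ | x ∈ Set.Icc (0 : ℝ) 1 ∧ (1 - 1/4 + 1/4 * x) ^ d = x} :=
  ⟨1, by norm_num⟩

lemma eta_nonneg (d : ℕ) : 0 ≤ eta d (1/4) := by
  apply le_csInf (eta_set_nonempty d)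
  rintro x ⟨⟨hx, _⟩, _⟩
  exact hx

lemma eta_le (d : ℕ) (hd : (0.9 : ℝ) ^ d ≤ 1/5) : eta d (1/4) ≤ (0.9 : ℝ) ^ d := by
  set a : ℝ := (0.9 : ℝ) ^ d with ha
  have ha0 : (0 : ℝ) ≤ a := by positivity
  have ha1 : a ≤ 1 := hd.trans (by norm_num)
  -- h x = (3/4 + x/4)^d - x
  have hcont : ContinuousOn (fun x : ℝ => (1 - 1/4 + 1/4 * x) ^ d - x) (Set.Icc 0 a) := by
    fun_prop
  have hIVT := intermediate_value_Icc' ha0 hcont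
  have h0 : (0:ℝ) ≤ (fun x : ℝ => (1 - 1/4 + 1/4 * x) ^ d - x) 0 := by
    simp only [mul_zero, add_zero, sub_zero]
    positivity
  have hA : (fun x : ℝ => (1 - 1/4 + 1/4 * x) ^ d - x) a ≤ 0 := by
    simp only [sub_nonpos]
    calc (1 - 1/4 + 1/4 * a) ^ d ≤ (0.8 : ℝ) ^ d := by
          apply pow_le_pow_left₀ (by linarith) (by linarith)
      _ ≤ (0.9 : ℝ) ^ d := by
          apply pow_le_pow_left₀ (by norm_num) (by norm_num)
  have hmem : (0:ℝ) ∈ Set.Icc ((fun x : ℝ => (1 - 1/4 + 1/4 * x) ^ d - x) a)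
      ((fun x : ℝ => (1 - 1/4 + 1/4 * x) ^ d - x) 0) := ⟨hA, h0⟩
  obtain ⟨x, hx, hfx⟩ := hIVT hmem
  have hroot : (1 - 1/4 + 1/4 * x) ^ d = x := by
    have : (1 - 1/4 + 1/4 * x) ^ d - x = 0 := hfx
    linarith
  have hx1 : x ≤ 1 := hx.2.trans ha1
  calc eta d (1/4) ≤ x := by
        apply csInf_le
        · exact ⟨0, fun y hy => hy.1.1⟩
        · exact ⟨⟨hx.1, hx1⟩, by norm_num at hroot ⊢; linarith [hroot]⟩
    _ ≤ a := hx.2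

/-- `d · eta (d-1, 1/4) → 0` as `d → ∞`, where
`eta (d-1) (1/4)` is the smallest `x ∈ [0,1]` with `(3/4 + x/4)^(d-1) = x`.
In particular there is a threshold `d_P` such that `d · eta (d-1, 1/4) < 1` for
every natural number `d ≥ d_P`. -/
theorem d_mul_eta_tendsto_zero :
    Filter.Tendsto (fun d : ℕ => (d : ℝ) * eta (d - 1) (1 / 4))
      Filter.atTop (nhds 0) ∧
    ∃ dP : ℕ, ∀ d : ℕ, dP ≤ d → (d : ℝ) * eta (d - 1) (1 / 4) < 1 := by
  have hpow : Filter.Tendsto (fun n : ℕ => (0.9 : ℝ) ^ n) Filter.atTop (nhds 0) :=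
    tendsto_pow_atTop_nhds_zero_of_lt_one (by norm_num) (by norm_num)
  obtain ⟨N, hN⟩ := (hpow.eventually (eventually_le_nhds (show (0:ℝ) < 1/5 by norm_num))).exists_forall_of_atTop
  -- upper bound function tends to 0
  have hupper : Filter.Tendsto (fun d : ℕ => (d : ℝ) * (0.9 : ℝ) ^ (d - 1))
      Filter.atTop (nhds 0) := by
    have h1 : Filter.Tendsto (fun n : ℕ => (10/9 : ℝ) * ((n : ℝ) * (0.9 : ℝ) ^ n))
        Filter.atTop (nhds ((10/9) * 0)) :=
      (tendsto_self_mul_const_pow_of_lt_one (by norm_num) (by norm_num)).const_mul _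
    rw [mul_zero] at h1
    apply h1.congr'
    filter_upwards [Filter.eventually_ge_atTop 1] with d hd
    obtain ⟨e, rfl⟩ := Nat.exists_eq_add_of_le hd
    have he : 1 + e - 1 = e := by omega
    rw [he]
    push_cast
    rw [pow_add]
    ring
  have key : Filter.Tendsto (fun d : ℕ => (d : ℝ) * eta (d - 1) (1 / 4))
      Filter.atTop (nhds 0) := by
    apply tendsto_of_tendsto_of_tendsto_of_le_of_le' tendsto_const_nhds hupper
    · filter_upwards with d
      have := eta_nonneg (d - 1)
      positivity
    · filter_upwards [Filter.eventually_ge_atTop (N + 1)] with d hd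
      have hle : eta (d - 1) (1/4) ≤ (0.9 : ℝ) ^ (d - 1) :=
        eta_le _ (hN _ (by omega))
      have hd0 : (0:ℝ) ≤ (d : ℝ) := Nat.cast_nonneg d
      exact mul_le_mul_of_nonneg_left hle hd0
  refine ⟨key, ?_⟩
  obtain ⟨dP, hdP⟩ := (key.eventually (eventually_lt_nhds (show (0:ℝ) < 1 by norm_num))).exists_forall_of_atTop
  exact ⟨dP, hdP⟩
end
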